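/- arXiv:1406.0142 — 3 statements merged into one kernel-verified Lean document; each statement's English description precedes it below -/
import Mathlib

section
/- Let m ∈ [n−1], write π for the transposition (m, m+1), and for a polynomial g let g^π denote g with the variables x_m and x_{m+1} swapped. Then the following polynomial identities hold for top sets B of [n]: (1) if both m ∉ B and m+1 ∉ B, or both m ∈ B and m+1 ∈ B, then χ_B^π = χ_B; (2) if B ∈ B_n has b_{i+1} = m and m+1 ∉ B, and B^π (obtained from B by replacing m with m+1) is also a top set, then χ_B^π = (1/(m−2i))·χ_B + ((m−2i−1)/(m−2i))·χ_{B^π} and χ_{B^π}^π = (−1/(m−2i))·χ_{B^π} + ((m−2i+1)/(m−2i))·χ_B; (3) if B ∈ B_n has b_{i+1} = m, m+1 ∉ B, and B^π is not a top set (which forces m = 2i+1), then χ_B^π = χ_B. -/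
/-!
Write `σ = (a b)` and `B' = σ ∘ B`, and call `A` admissible for `B` if it is injective, disjoint
from `B` and `A < B`; then `σ χ_{A,B} = χ_{σA,σB}`.

In case (1), `σ ∘ B = B ∘ τ` with `τ` the identity or the transposition of the positions of `a`
and `b`, and `A ↦ σ ∘ A ∘ τ⁻¹` permutes the admissible sequences of `B`, so `χ_B` is fixed.

In case (2), `A ↦ σ ∘ A` maps the admissible sequences of `B` bijectively onto those of `B'`
with `A i ≠ a`. With `S` the part of `χ_{B'}` coming from `A i = a`, this gives
`σ χ_B = χ_{B'} - S` and `σ χ_{B'} = χ_B - S`; the formulas follow once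
`χ_{B'} - χ_B = (a + 1 - 2i) S`. For that identity,
`χ_{σA,B'} - χ_{A,B} = (x_a - x_b) ∏_{k ≠ i} (x_{A₀ k} - x_{B' k})`, where
`A₀ = (A_i a) ∘ σ ∘ A` is `A` with `a` moved to position `i`, and each such `A₀` comes from
exactly `a - 2i` sequences `A = σ ∘ (v a) ∘ A₀`: one for each `v < a` that is not a value of
`B` or of `A₀` at a position below `i`.

Since `σ` sends every witness for `B` to one for `B'`, `B'` is always a top set and case (3) is
vacuous.
-/

open MvPolynomial

/-- `B : Fin d → Fin n` is a top set if it is strictly increasing and there is a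
sequence `A` of `d` distinct elements, disjoint from `B`, with `A i < B i` for all `i`. -/
def IsTopSet {n d : ℕ} (B : Fin d → Fin n) : Prop :=
  StrictMono B ∧ ∃ A : Fin d → Fin n,
    Function.Injective A ∧ (∀ i j, A i ≠ B j) ∧ ∀ i, A i < B i

/-- `χ_{A,B} = ∏ i (x_{a_i} - x_{b_i})`. -/
noncomputable def chiAB {n d : ℕ} (A B : Fin d → Fin n) : MvPolynomial (Fin n) ℝ :=
  ∏ i, (X (A i) - X (B i))

open Classical in
/-- `χ_B = ∑_{A < B, A disjoint from B} χ_{A,B}`. -/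
noncomputable def chiB {n d : ℕ} (B : Fin d → Fin n) : MvPolynomial (Fin n) ℝ :=
  ∑ A ∈ Finset.univ.filter (fun A : Fin d → Fin n =>
      Function.Injective A ∧ (∀ i j, A i ≠ B j) ∧ ∀ i, A i < B i),
    chiAB A B

open Finset
open Equiv (swap Perm)

theorem sub_eq_smul_add_smul_of_sub_eq_smul {K V : Type*} [Field K] [AddCommGroup V]
    [Module K V] {x y s : V} {c : K} (hc : c ≠ 0) (h : y - x = c • s) :
    y - s = c⁻¹ • x + ((c - 1) / c) • y ∧ x - s = (-c⁻¹) • y + ((c + 1) / c) • x := by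
  have hs : s = c⁻¹ • (y - x) := by rw [h, smul_smul, inv_mul_cancel₀ hc, one_smul]
  subst hs
  rw [sub_div, add_div, div_self hc, one_div]
  constructor <;> module

section Admissible

variable {n d : ℕ}

open Classical in
noncomputable def admissible (B : Fin d → Fin n) : Finset (Fin d → Fin n) :=
  Finset.univ.filter (fun A : Fin d → Fin n =>
      Function.Injective A ∧ (∀ i j, A i ≠ B j) ∧ ∀ i, A i < B i)

theorem mem_admissible {A B : Fin d → Fin n} :
    A ∈ admissible B ↔ Function.Injective A ∧ (∀ i j, A i ≠ B j) ∧ ∀ i, A i < B i := by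
  simp [admissible]

theorem chiB_eq_sum_admissible (B : Fin d → Fin n) :
    chiB B = ∑ A ∈ admissible B, chiAB A B := rfl

theorem rename_chiAB (f : Fin n → Fin n) (A B : Fin d → Fin n) :
    rename f (chiAB A B) = chiAB (f ∘ A) (f ∘ B) := by
  simp [chiAB, map_prod]

theorem chiAB_comp_perm (τ : Perm (Fin d)) (A B : Fin d → Fin n) :
    chiAB (A ∘ τ) (B ∘ τ) = chiAB A B :=
  Equiv.prod_comp τ fun k => X (A k) - X (B k)

theorem comp_perm_mem_admissible {A B : Fin d → Fin n} (τ : Perm (Fin d))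
    (hA : A ∈ admissible B) : A ∘ τ ∈ admissible (B ∘ τ) := by
  obtain ⟨hinj, hdisj, hlt⟩ := mem_admissible.1 hA
  exact mem_admissible.2 ⟨hinj.comp τ.injective, fun k l => hdisj _ _, fun k => hlt _⟩

theorem perm_comp_mem_admissible {A B : Fin d → Fin n} (σ : Perm (Fin n))
    (hA : A ∈ admissible B) (hlt : ∀ k, σ (A k) < σ (B k)) : σ ∘ A ∈ admissible (σ ∘ B) := by
  obtain ⟨hinj, hdisj, -⟩ := mem_admissible.1 hA
  exact mem_admissible.2 ⟨σ.injective.comp hinj, fun k l h => hdisj k l (σ.injective h), hlt⟩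

theorem rename_chiB_eq_self {B : Fin d → Fin n} (σ : Perm (Fin n)) (τ : Perm (Fin d))
    (hστ : σ ∘ B = B ∘ τ) (hmaps : ∀ A ∈ admissible B, σ ∘ A ∈ admissible (σ ∘ B)) :
    rename σ (chiB B) = chiB B := by
  set φ : (Fin d → Fin n) → Fin d → Fin n := fun A => σ ∘ A ∘ τ.symm
  have hφ : Function.Injective φ := fun A A' h => funext fun k => by
    simpa [φ] using congrFun h (τ k)
  have hB : (σ ∘ B) ∘ τ.symm = B := by
    rw [hστ, Function.comp_assoc, τ.self_comp_symm, Function.comp_id]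
  have hmaps' : ∀ A ∈ admissible B, φ A ∈ admissible B := fun A hA => by
    have := comp_perm_mem_admissible τ.symm (hmaps A hA)
    rwa [hB] at this
  have himage : (admissible B).image φ = admissible B :=
    eq_of_subset_of_card_le (image_subset_iff.2 hmaps') (card_image_of_injective _ hφ).ge
  calc rename σ (chiB B) = ∑ A ∈ admissible B, chiAB (φ A) B := by
        rw [chiB_eq_sum_admissible, map_sum]
        refine sum_congr rfl fun A _ => ?_
        rw [rename_chiAB, hστ, ← chiAB_comp_perm τ (φ A)]
        congr 1
        ext k
        simp [φ]
    _ = chiB B := by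
        rw [← sum_image (f := fun A => chiAB A B) hφ.injOn, himage, chiB_eq_sum_admissible]

theorem swap_apply_comp_mem_admissible {A B : Fin d → Fin n} {i : Fin d} {w : Fin n}
    (hA : A ∈ admissible B) (hw : w ∉ Set.range B) (hwi : w < B i)
    (hwj : ∀ j, A j = w → A i < B j) : swap (A i) w ∘ A ∈ admissible B := by
  obtain ⟨hinj, hdisj, hlt⟩ := mem_admissible.1 hA
  refine mem_admissible.2 ⟨(swap _ _).injective.comp hinj, fun k l => ?_, fun k => ?_⟩ <;>
    simp only [Function.comp_apply, Equiv.swap_apply_def] <;> split_ifs with hki hkw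
  · exact fun e => hw ⟨l, e.symm⟩
  · exact hdisj i l
  · exact hdisj k l
  · exact hinj hki ▸ hwi
  · exact hwj k hkw
  · exact hlt k

theorem card_sdiff_image_Iio_add {B C : Fin d → Fin n} (hB : StrictMono B)
    (hC : Function.Injective C) {i : Fin d} (hdisj : ∀ k < i, ∀ l < i, C k ≠ B l)
    (hlt : ∀ k < i, C k < B k) :
    #(Iio (B i) \ ((Iio i).image C ∪ (Iio i).image B)) + 2 * i = B i := by
  have hsub : (Iio i).image C ∪ (Iio i).image B ⊆ Iio (B i) := by
    simp only [union_subset_iff, image_subset_iff, mem_Iio]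
    exact ⟨fun k hk => (hlt k hk).trans (hB hk), fun k hk => hB hk⟩
  have hdisj' : Disjoint ((Iio i).image C) ((Iio i).image B) := by
    simp only [disjoint_left, mem_image, mem_Iio]
    rintro _ ⟨k, hk, rfl⟩ ⟨l, hl, hkl⟩
    exact hdisj k hk l hl hkl.symm
  have hcard := card_le_card hsub
  rw [card_union_of_disjoint hdisj', card_image_of_injective _ hC,
    card_image_of_injective _ hB.injective, Fin.card_Iio, Fin.card_Iio] at hcard
  rw [card_sdiff_of_subset hsub, card_union_of_disjoint hdisj', card_image_of_injective _ hC,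
    card_image_of_injective _ hB.injective, Fin.card_Iio, Fin.card_Iio]
  omega

theorem two_mul_le_of_mem_admissible {A B : Fin d → Fin n} (hB : StrictMono B)
    (hA : A ∈ admissible B) (i : Fin d) : 2 * (i : ℕ) ≤ B i := by
  obtain ⟨hinj, hdisj, hlt⟩ := mem_admissible.1 hA
  have := card_sdiff_image_Iio_add hB hinj (i := i) (fun k _ l _ => hdisj k l) fun k _ => hlt k
  omega

noncomputable def chiBAt (B : Fin d → Fin n) (i : Fin d) (v : Fin n) :
    MvPolynomial (Fin n) ℝ :=
  ∑ A ∈ admissible B with A i = v, chiAB A B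

noncomputable def chiABErase (A B : Fin d → Fin n) (i : Fin d) : MvPolynomial (Fin n) ℝ :=
  ∏ k ∈ univ.erase i, (X (A k) - X (B k))

theorem chiAB_eq_mul_chiABErase (A B : Fin d → Fin n) (i : Fin d) :
    chiAB A B = (X (A i) - X (B i)) * chiABErase A B i :=
  (mul_prod_erase _ _ (mem_univ i)).symm

theorem chiABErase_congr {A A' B B' : Fin d → Fin n} {i : Fin d}
    (hA : ∀ k ≠ i, A k = A' k) (hB : ∀ k ≠ i, B k = B' k) :
    chiABErase A B i = chiABErase A' B' i :=
  prod_congr rfl fun k hk => by rw [hA k (ne_of_mem_erase hk), hB k (ne_of_mem_erase hk)]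

theorem chiABErase_eq_mul {A B : Fin d → Fin n} {i j : Fin d} (hji : j ≠ i) :
    chiABErase A B i
      = (X (A j) - X (B j)) * ∏ k ∈ (univ.erase i).erase j, (X (A k) - X (B k)) :=
  (mul_prod_erase _ _ (mem_erase.2 ⟨hji, mem_univ j⟩)).symm

end Admissible

section AdjacentSwap

variable {n d : ℕ} {a b : Fin n}

theorem swap_comp_swap_comp {α β : Type*} [DecidableEq α] (a b : α) (f : β → α) :
    swap a b ∘ swap a b ∘ f = f := by
  ext; simp

theorem swap_apply_of_lt {a b v : Fin n} (hab : (b : ℕ) = a + 1) (hv : v < a) :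
    swap a b v = v :=
  Equiv.swap_apply_of_ne_of_ne hv.ne fun hvb => by
    rw [Fin.lt_def, hvb, hab] at hv; omega

theorem swap_lt_swap_of_lt (hab : (b : ℕ) = a + 1) {v w : Fin n} (hvw : v < w)
    (h : v = a → w ≠ b) : swap a b v < swap a b w := by
  simp only [Equiv.swap_apply_def]
  split_ifs <;> simp only [Fin.lt_def, Fin.ext_iff] at * <;> omega

theorem swap_comp_mem_admissible_swap_comp (hab : (b : ℕ) = a + 1) {A B : Fin d → Fin n}
    (hA : A ∈ admissible B) (h : ∀ k, A k = a → B k ≠ b) :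
    swap a b ∘ A ∈ admissible (swap a b ∘ B) :=
  perm_comp_mem_admissible _ hA fun k =>
    swap_lt_swap_of_lt hab ((mem_admissible.1 hA).2.2 k) (h k)

theorem rename_swap_chiB_of_not_mem_range (hab : (b : ℕ) = a + 1) {B : Fin d → Fin n}
    (ha : a ∉ Set.range B) (hb : b ∉ Set.range B) :
    rename (swap a b) (chiB B) = chiB B := by
  have hfix : swap a b ∘ B = B :=
    funext fun k => Equiv.swap_apply_of_ne_of_ne (fun h => ha ⟨k, h⟩) (fun h => hb ⟨k, h⟩)
  exact rename_chiB_eq_self _ 1 (by rw [hfix]; rfl) fun A hA =>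
    swap_comp_mem_admissible_swap_comp hab hA fun k _ h => hb ⟨k, h⟩

theorem rename_swap_chiB_of_mem_range (hab : (b : ℕ) = a + 1) {B : Fin d → Fin n}
    (hB : Function.Injective B) {i j : Fin d} (hBi : B i = a) (hBj : B j = b) :
    rename (swap a b) (chiB B) = chiB B :=
  rename_chiB_eq_self _ (swap i j) (by rw [← hBi, ← hBj]; exact hB.swap_comp i j)
    fun A hA => swap_comp_mem_admissible_swap_comp hab hA fun k hk _ =>
      (mem_admissible.1 hA).2.1 k i (hk.trans hBi.symm)

end AdjacentSwap

section Raisable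

variable {n d : ℕ}

structure IsRaisable (B : Fin d → Fin n) (i : Fin d) (a b : Fin n) : Prop where
  val_eq : (b : ℕ) = a + 1
  strictMono : StrictMono B
  apply_eq : B i = a
  not_mem_range : b ∉ Set.range B

noncomputable def pin (a b : Fin n) (i : Fin d) (A : Fin d → Fin n) : Fin d → Fin n :=
  swap (A i) a ∘ swap a b ∘ A

namespace IsRaisable

variable {A B : Fin d → Fin n} {i : Fin d} {a b : Fin n}

theorem lt (h : IsRaisable B i a b) : a < b := by
  rw [Fin.lt_def, h.val_eq]; omega

theorem swap_apply_of_ne (h : IsRaisable B i a b) {k : Fin d} (hk : k ≠ i) :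
    swap a b (B k) = B k :=
  Equiv.swap_apply_of_ne_of_ne
    (fun hka => hk (h.strictMono.injective (hka.trans h.apply_eq.symm)))
    fun hkb => h.not_mem_range ⟨k, hkb⟩

theorem swap_apply_self (h : IsRaisable B i a b) : swap a b (B i) = b := by
  rw [h.apply_eq, Equiv.swap_apply_left]

theorem apply_lt (h : IsRaisable B i a b) (hA : A ∈ admissible B) : A i < a :=
  h.apply_eq ▸ (mem_admissible.1 hA).2.2 i

theorem swap_apply_apply (h : IsRaisable B i a b) (hA : A ∈ admissible B) :
    swap a b (A i) = A i :=
  swap_apply_of_lt h.val_eq (h.apply_lt hA)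

theorem apply_ne (h : IsRaisable B i a b) (hA : A ∈ admissible B) (k : Fin d) : A k ≠ a :=
  fun hk => (mem_admissible.1 hA).2.1 k i (hk.trans h.apply_eq.symm)

theorem strictMono_swap_comp (h : IsRaisable B i a b) : StrictMono (swap a b ∘ B) :=
  fun _ l hkl => swap_lt_swap_of_lt h.val_eq (h.strictMono hkl) fun _ hl =>
    h.not_mem_range ⟨l, hl⟩

theorem swap_comp_mem (h : IsRaisable B i a b) (hA : A ∈ admissible B) :
    swap a b ∘ A ∈ admissible (swap a b ∘ B) :=
  swap_comp_mem_admissible_swap_comp h.val_eq hA fun k hk _ => h.apply_ne hA k hk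

theorem swap_comp_mem_of_apply_ne (h : IsRaisable B i a b)
    (hA : A ∈ admissible (swap a b ∘ B)) (hAi : A i ≠ a) : swap a b ∘ A ∈ admissible B := by
  have hmem := swap_comp_mem_admissible_swap_comp h.val_eq hA fun k hka hkb => by
    have hk : k = i := h.strictMono.injective <| h.apply_eq ▸
      (Equiv.swap_apply_eq_iff.1 hkb).trans (Equiv.swap_apply_right a b)
    exact hAi (hk ▸ hka)
  rwa [swap_comp_swap_comp] at hmem

theorem isTopSet_swap_comp (h : IsRaisable B i a b) (hB : IsTopSet B) :
    IsTopSet (swap a b ∘ B) := by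
  obtain ⟨-, A, hA⟩ := hB
  exact ⟨h.strictMono_swap_comp, _, mem_admissible.1 (h.swap_comp_mem (mem_admissible.2 hA))⟩

theorem two_mul_le (h : IsRaisable B i a b) (hB : IsTopSet B) : 2 * (i : ℕ) ≤ a := by
  obtain ⟨-, A, hA⟩ := hB
  exact h.apply_eq ▸ two_mul_le_of_mem_admissible h.strictMono (mem_admissible.2 hA) i

theorem sum_admissible_swap_comp {M : Type*} [AddCommMonoid M] (h : IsRaisable B i a b)
    (f : (Fin d → Fin n) → M) :
    ∑ A ∈ admissible B, f (swap a b ∘ A) = ∑ A ∈ admissible (swap a b ∘ B) with A i ≠ a, f A :=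
  sum_nbij' (swap a b ∘ ·) (swap a b ∘ ·)
    (fun A hA => mem_filter.2 ⟨h.swap_comp_mem hA,
      by simpa [h.swap_apply_apply hA] using (h.apply_lt hA).ne⟩)
    (fun A hA => h.swap_comp_mem_of_apply_ne (mem_filter.1 hA).1 (mem_filter.1 hA).2)
    (fun A _ => swap_comp_swap_comp a b A) (fun A _ => swap_comp_swap_comp a b A)
    fun _ _ => rfl

theorem chiB_swap_comp_eq (h : IsRaisable B i a b) :
    chiB (swap a b ∘ B) = chiBAt (swap a b ∘ B) i a
      + ∑ A ∈ admissible B, chiAB (swap a b ∘ A) (swap a b ∘ B) := by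
  rw [h.sum_admissible_swap_comp fun A => chiAB A (swap a b ∘ B), chiBAt,
    chiB_eq_sum_admissible]
  exact (sum_filter_add_sum_filter_not _ _ _).symm

theorem rename_swap_chiB (h : IsRaisable B i a b) :
    rename (swap a b) (chiB B) = chiB (swap a b ∘ B) - chiBAt (swap a b ∘ B) i a := by
  rw [h.chiB_swap_comp_eq, add_sub_cancel_left, chiB_eq_sum_admissible, map_sum]
  exact sum_congr rfl fun A _ => rename_chiAB _ A B

theorem chiAB_swap_comp_of_apply_eq (h : IsRaisable B i a b)
    (hA : A ∈ admissible (swap a b ∘ B)) (hAi : A i = a) :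
    chiAB (swap a b ∘ A) B = -chiAB A (swap a b ∘ B) := by
  obtain ⟨hinj, hdisj, -⟩ := mem_admissible.1 hA
  have hErase : chiABErase (swap a b ∘ A) B i = chiABErase A (swap a b ∘ B) i :=
    chiABErase_congr (fun k hk => Equiv.swap_apply_of_ne_of_ne
        (fun hka => hk (hinj (hka.trans hAi.symm)))
        fun hkb => hdisj k i (hkb.trans h.swap_apply_self.symm))
      fun k hk => (h.swap_apply_of_ne hk).symm
  rw [chiAB_eq_mul_chiABErase _ _ i, chiAB_eq_mul_chiABErase _ _ i, hErase]
  simp only [Function.comp_apply, hAi, Equiv.swap_apply_left, h.apply_eq]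
  ring

theorem rename_swap_chiB_swap_comp (h : IsRaisable B i a b) :
    rename (swap a b) (chiB (swap a b ∘ B)) = chiB B - chiBAt (swap a b ∘ B) i a := by
  have hpinned : ∑ A ∈ admissible (swap a b ∘ B) with A i = a, chiAB (swap a b ∘ A) B
      = -chiBAt (swap a b ∘ B) i a := by
    rw [chiBAt, ← sum_neg_distrib]
    exact sum_congr rfl fun A hA =>
      h.chiAB_swap_comp_of_apply_eq (mem_filter.1 hA).1 (mem_filter.1 hA).2
  have hfree : ∑ A ∈ admissible (swap a b ∘ B) with A i ≠ a, chiAB (swap a b ∘ A) B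
      = chiB B := by
    rw [← h.sum_admissible_swap_comp fun A => chiAB (swap a b ∘ A) B, chiB_eq_sum_admissible]
    simp only [swap_comp_swap_comp]
  rw [chiB_eq_sum_admissible, map_sum]
  simp only [rename_chiAB, swap_comp_swap_comp]
  rw [← sum_filter_add_sum_filter_not _ (fun A => A i = a), hpinned, hfree]
  abel

theorem pin_apply_self (h : IsRaisable B i a b) (hA : A ∈ admissible B) :
    pin a b i A i = a := by
  simp [pin, h.swap_apply_apply hA]

theorem pin_mem (h : IsRaisable B i a b) (hA : A ∈ admissible B) :
    pin a b i A ∈ admissible (swap a b ∘ B) := by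
  have hσA := h.swap_comp_mem hA
  have hσAi : (swap a b ∘ A) i = A i := h.swap_apply_apply hA
  have hmem := swap_apply_comp_mem_admissible hσA (w := a)
    (fun ⟨k, hk⟩ => h.not_mem_range ⟨k, (Equiv.swap_apply_eq_iff.1 hk).trans
      (Equiv.swap_apply_left a b)⟩)
    (by rw [Function.comp_apply, h.swap_apply_self, Fin.lt_def, h.val_eq]; omega)
    fun j hj => hσAi ▸ (h.apply_lt hA).trans (hj ▸ (mem_admissible.1 hσA).2.2 j)
  rwa [hσAi] at hmem

theorem pin_apply_ne (h : IsRaisable B i a b) (hA : A ∈ admissible B) {k : Fin d}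
    (hk : k < i) : pin a b i A k ≠ A i := by
  intro hkA
  have hAk : A k = b := by
    have := Equiv.swap_apply_eq_iff.1 hkA
    rw [Equiv.swap_apply_left] at this
    rw [Equiv.swap_apply_eq_iff.1 this, Equiv.swap_apply_left]
  have hlt := ((mem_admissible.1 hA).2.2 k).trans (h.strictMono hk)
  rw [hAk, h.apply_eq] at hlt
  exact hlt.not_gt h.lt

theorem swap_comp_swap_comp_mem (h : IsRaisable B i a b) {A₀ : Fin d → Fin n}
    (hA₀ : A₀ ∈ admissible (swap a b ∘ B)) (hA₀i : A₀ i = a) {v : Fin n} (hva : v < a)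
    (hvA₀ : ∀ k < i, A₀ k ≠ v) (hvB : ∀ k < i, B k ≠ v) :
    swap a b ∘ swap v a ∘ A₀ ∈ admissible B := by
  have hmem : swap v a ∘ A₀ ∈ admissible (swap a b ∘ B) := by
    have := swap_apply_comp_mem_admissible hA₀ (i := i) (w := v) ?_ ?_ ?_
    · rwa [hA₀i, Equiv.swap_comm a v] at this
    · rintro ⟨l, hl⟩
      rcases lt_or_ge l i with hli | hil
      · exact hvB l hli ((h.swap_apply_of_ne hli.ne).symm.trans hl)
      · have := h.strictMono_swap_comp.monotone hil
        rw [hl, Function.comp_apply, h.swap_apply_self] at this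
        exact this.not_gt (hva.trans h.lt)
    · rw [Function.comp_apply, h.swap_apply_self]
      exact hva.trans h.lt
    · intro j hj
      rcases lt_trichotomy j i with hji | rfl | hij
      · exact absurd hj (hvA₀ j hji)
      · exact absurd (hA₀i.symm.trans hj) hva.ne'
      · calc A₀ i = a := hA₀i
          _ < b := h.lt
          _ = (swap a b ∘ B) i := h.swap_apply_self.symm
          _ < (swap a b ∘ B) j := h.strictMono_swap_comp hij
  refine h.swap_comp_mem_of_apply_ne hmem ?_
  simpa [hA₀i] using hva.ne

theorem card_filter_pin_add (h : IsRaisable B i a b) {A₀ : Fin d → Fin n}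
    (hA₀ : A₀ ∈ admissible (swap a b ∘ B)) (hA₀i : A₀ i = a) :
    #{A ∈ admissible B | pin a b i A = A₀} + 2 * i = a := by
  obtain ⟨hinj, hdisj, hlt⟩ := mem_admissible.1 hA₀
  have hB' : ∀ k ≠ i, (swap a b ∘ B) k = B k := fun k hk => h.swap_apply_of_ne hk
  have hcount := card_sdiff_image_Iio_add h.strictMono hinj (i := i)
    (fun k _ l hl => hB' l hl.ne ▸ hdisj k l) fun k hk => hB' k hk.ne ▸ hlt k
  rw [h.apply_eq] at hcount
  rw [← hcount]
  congr 1
  have hφi : ∀ v < a, (swap a b ∘ swap v a ∘ A₀) i = v := fun v hv => by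
    simp [hA₀i, swap_apply_of_lt h.val_eq hv]
  refine card_nbij' (fun A => A i) (fun v => swap a b ∘ swap v a ∘ A₀) ?_ ?_ ?_ ?_
  · intro A hA
    obtain ⟨hAB, rfl⟩ := mem_filter.1 (mem_coe.1 hA)
    simp only [coe_sdiff, Set.mem_sdiff, mem_coe, mem_Iio, mem_union, mem_image, not_or,
      not_exists, not_and]
    exact ⟨h.apply_lt hAB, fun k hk => h.pin_apply_ne hAB hk,
      fun k _ hk => (mem_admissible.1 hAB).2.1 i k hk.symm⟩
  · intro v hv
    simp only [coe_sdiff, Set.mem_sdiff, mem_coe, mem_Iio, mem_union, mem_image, not_or,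
      not_exists, not_and] at hv
    obtain ⟨hva, hvA₀, hvB⟩ := hv
    refine mem_coe.2 (mem_filter.2 ⟨h.swap_comp_swap_comp_mem hA₀ hA₀i hva hvA₀ hvB, ?_⟩)
    simp only [pin, hφi v hva, swap_comp_swap_comp]
  · intro A hA
    obtain ⟨-, rfl⟩ := mem_filter.1 (mem_coe.1 hA)
    simp only [pin, swap_comp_swap_comp]
  · intro v hv
    exact hφi v (mem_Iio.1 (mem_sdiff.1 (mem_coe.1 hv)).1)

theorem pin_apply_of_ne (h : IsRaisable B i a b) (hA : A ∈ admissible B) {k : Fin d}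
    (hk : k ≠ i) (hσk : swap a b (A k) = A k) : pin a b i A k = A k := by
  rw [pin, Function.comp_apply, Function.comp_apply, hσk]
  exact Equiv.swap_apply_of_ne_of_ne (fun e => hk ((mem_admissible.1 hA).1 e)) (h.apply_ne hA k)

theorem chiAB_swap_comp_sub_chiAB_of_not_mem_range (h : IsRaisable B i a b)
    (hA : A ∈ admissible B) (hb : b ∉ Set.range A) :
    chiAB (swap a b ∘ A) (swap a b ∘ B) - chiAB A B
      = (X a - X b) * chiABErase (pin a b i A) (swap a b ∘ B) i := by
  have hσ : ∀ k, swap a b (A k) = A k := fun k =>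
    Equiv.swap_apply_of_ne_of_ne (h.apply_ne hA k) fun e => hb ⟨k, e⟩
  have hσE : chiABErase (swap a b ∘ A) (swap a b ∘ B) i = chiABErase A B i :=
    chiABErase_congr (fun k _ => hσ k) fun k hk => h.swap_apply_of_ne hk
  have hpinE : chiABErase (pin a b i A) (swap a b ∘ B) i = chiABErase A B i :=
    chiABErase_congr (fun k hk => h.pin_apply_of_ne hA hk (hσ k)) fun k hk =>
      h.swap_apply_of_ne hk
  rw [chiAB_eq_mul_chiABErase _ _ i, chiAB_eq_mul_chiABErase A B i, hσE, hpinE,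
    Function.comp_apply, Function.comp_apply, hσ, h.swap_apply_self, h.apply_eq]
  ring

theorem chiAB_swap_comp_sub_chiAB_of_apply_eq (h : IsRaisable B i a b)
    (hA : A ∈ admissible B) {j : Fin d} (hj : A j = b) :
    chiAB (swap a b ∘ A) (swap a b ∘ B) - chiAB A B
      = (X a - X b) * chiABErase (pin a b i A) (swap a b ∘ B) i := by
  have hji : j ≠ i := fun e => (h.apply_lt hA).not_gt (e ▸ hj ▸ h.lt)
  have hσ : ∀ k ≠ j, swap a b (A k) = A k := fun k hk =>
    Equiv.swap_apply_of_ne_of_ne (h.apply_ne hA k) fun e =>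
      hk ((mem_admissible.1 hA).1 (e.trans hj.symm))
  have hrest : ∀ C : Fin d → Fin n, (∀ k ≠ i, k ≠ j → C k = A k) →
      ∏ k ∈ (univ.erase i).erase j, (X (C k) - X ((swap a b ∘ B) k))
        = ∏ k ∈ (univ.erase i).erase j, (X (A k) - X (B k) : MvPolynomial (Fin n) ℝ) :=
    fun C hC => prod_congr rfl fun k hk => by
      obtain ⟨hkj, hki⟩ := mem_erase.1 hk
      rw [hC k (ne_of_mem_erase hki) hkj, Function.comp_apply,
        h.swap_apply_of_ne (ne_of_mem_erase hki)]
  have hpinj : pin a b i A j = A i := by simp [pin, hj]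
  rw [chiAB_eq_mul_chiABErase _ _ i, chiAB_eq_mul_chiABErase A B i, chiABErase_eq_mul hji,
    chiABErase_eq_mul hji, chiABErase_eq_mul hji, hrest (swap a b ∘ A) fun k _ hkj => hσ k hkj,
    hrest (pin a b i A) fun k hki hkj => h.pin_apply_of_ne hA hki (hσ k hkj)]
  simp only [Function.comp_apply, hj, hpinj, h.swap_apply_apply hA, Equiv.swap_apply_right,
    Equiv.swap_apply_left, h.apply_eq, h.swap_apply_of_ne hji]
  ring

theorem chiAB_swap_comp_sub_chiAB (h : IsRaisable B i a b) (hA : A ∈ admissible B) :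
    chiAB (swap a b ∘ A) (swap a b ∘ B) - chiAB A B
      = (X a - X b) * chiABErase (pin a b i A) (swap a b ∘ B) i := by
  by_cases hb : b ∈ Set.range A
  · obtain ⟨j, hj⟩ := hb
    exact h.chiAB_swap_comp_sub_chiAB_of_apply_eq hA hj
  · exact h.chiAB_swap_comp_sub_chiAB_of_not_mem_range hA hb

theorem chiB_swap_comp_sub_chiB (h : IsRaisable B i a b) :
    chiB (swap a b ∘ B) - chiB B
      = (((a : ℕ) : ℝ) + 1 - 2 * ((i : ℕ) : ℝ)) • chiBAt (swap a b ∘ B) i a := by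
  have hmaps : ∀ A ∈ admissible B,
      pin a b i A ∈ {A₀ ∈ admissible (swap a b ∘ B) | A₀ i = a} := fun A hA =>
    mem_filter.2 ⟨h.pin_mem hA, h.pin_apply_self hA⟩
  have hfiber : ∀ A₀ ∈ {A₀ ∈ admissible (swap a b ∘ B) | A₀ i = a},
      ∑ A ∈ admissible B with pin a b i A = A₀, (X a - X b) * chiABErase A₀ (swap a b ∘ B) i
        = (((a : ℕ) : ℝ) - 2 * ((i : ℕ) : ℝ)) • chiAB A₀ (swap a b ∘ B) := by
    intro A₀ hA₀
    obtain ⟨hA₀, hA₀i⟩ := mem_filter.1 hA₀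
    have hcard : (#{A ∈ admissible B | pin a b i A = A₀} : ℝ) = (a : ℕ) - 2 * (i : ℕ) := by
      rw [eq_sub_iff_add_eq]
      exact_mod_cast h.card_filter_pin_add hA₀ hA₀i
    rw [sum_const, ← Nat.cast_smul_eq_nsmul ℝ, hcard, chiAB_eq_mul_chiABErase _ _ i, hA₀i,
      Function.comp_apply, h.swap_apply_self]
  calc chiB (swap a b ∘ B) - chiB B
      = chiBAt (swap a b ∘ B) i a
          + ∑ A ∈ admissible B, (chiAB (swap a b ∘ A) (swap a b ∘ B) - chiAB A B) := by
        rw [h.chiB_swap_comp_eq, chiB_eq_sum_admissible B, sum_sub_distrib]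
        abel
    _ = chiBAt (swap a b ∘ B) i a
          + ∑ A ∈ admissible B, (X a - X b) * chiABErase (pin a b i A) (swap a b ∘ B) i := by
        rw [sum_congr rfl fun A hA => h.chiAB_swap_comp_sub_chiAB hA]
    _ = chiBAt (swap a b ∘ B) i a + (((a : ℕ) : ℝ) - 2 * ((i : ℕ) : ℝ)) •
          chiBAt (swap a b ∘ B) i a := by
        rw [← sum_fiberwise_of_maps_to' hmaps
          fun A₀ => (X a - X b) * chiABErase A₀ (swap a b ∘ B) i, sum_congr rfl hfiber,
          ← smul_sum, chiBAt]
    _ = _ := by module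

end IsRaisable

end Raisable

/-- Indices are 0-based: the paper's `x_m, x_{m+1}` are `X a, X b` with `(a : ℕ) = m - 1`, and its
`b_{i+1} = m` is `B i = a`, so its `m - 2i` is `a + 1 - 2i`. -/
theorem chiB_transposition {n d : ℕ} (B : Fin d → Fin n) (hB : IsTopSet B)
    (a b : Fin n) (hab : (b : ℕ) = (a : ℕ) + 1) :
    (((a ∉ Set.range B ∧ b ∉ Set.range B) ∨ (a ∈ Set.range B ∧ b ∈ Set.range B)) →
      MvPolynomial.rename (⇑(Equiv.swap a b)) (chiB B) = chiB B) ∧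
    (∀ i : Fin d, B i = a → b ∉ Set.range B →
      ((IsTopSet ((Equiv.swap a b) ∘ B) →
        MvPolynomial.rename (⇑(Equiv.swap a b)) (chiB B)
          = (((a : ℕ) : ℝ) + 1 - 2 * ((i : ℕ) : ℝ))⁻¹ • chiB B
            + (((((a : ℕ) : ℝ) + 1 - 2 * ((i : ℕ) : ℝ)) - 1)
                / (((a : ℕ) : ℝ) + 1 - 2 * ((i : ℕ) : ℝ))) • chiB ((Equiv.swap a b) ∘ B) ∧
        MvPolynomial.rename (⇑(Equiv.swap a b)) (chiB ((Equiv.swap a b) ∘ B))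
          = (-(((a : ℕ) : ℝ) + 1 - 2 * ((i : ℕ) : ℝ))⁻¹) • chiB ((Equiv.swap a b) ∘ B)
            + (((((a : ℕ) : ℝ) + 1 - 2 * ((i : ℕ) : ℝ)) + 1)
                / (((a : ℕ) : ℝ) + 1 - 2 * ((i : ℕ) : ℝ))) • chiB B) ∧
      (¬ IsTopSet ((Equiv.swap a b) ∘ B) →
        MvPolynomial.rename (⇑(Equiv.swap a b)) (chiB B) = chiB B))) := by
  refine ⟨?_, fun i hBi hb => ?_⟩
  · rintro (⟨ha, hb⟩ | ⟨⟨i, hBi⟩, ⟨j, hBj⟩⟩)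
    · exact rename_swap_chiB_of_not_mem_range hab ha hb
    · exact rename_swap_chiB_of_mem_range hab hB.1.injective hBi hBj
  · have h : IsRaisable B i a b := ⟨hab, hB.1, hBi, hb⟩
    have hc : ((a : ℕ) : ℝ) + 1 - 2 * ((i : ℕ) : ℝ) ≠ 0 := by
      have : (2 * (i : ℕ) : ℝ) ≤ (a : ℕ) := by exact_mod_cast h.two_mul_le hB
      exact ne_of_gt (by linarith)
    obtain ⟨h₁, h₂⟩ := sub_eq_smul_add_smul_of_sub_eq_smul hc h.chiB_swap_comp_sub_chiB
    refine ⟨fun _ => ⟨?_, ?_⟩, fun hnot => absurd (h.isTopSet_swap_comp hB) hnot⟩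
    · rw [h.rename_swap_chiB, h₁]
    · rw [h.rename_swap_chiB_swap_comp, h₂]
end

section
/- Let μ be a permutation-invariant probability measure on ℝⁿ with respect to which all polynomials are integrable, and let f be a harmonic multilinear polynomial in x₁,…,xₙ of degree at most d. Then Var_μ[f] ≤ Inf[f] ≤ d · Var_μ[f], where Var_μ[f] = E_μ[f²] − (E_μ[f])². -/
open MvPolynomial MeasureTheory

/-- A multilinear polynomial: every monomial is squarefree. -/
def IsMultilinear {n : ℕ} (P : MvPolynomial (Fin n) ℝ) : Prop :=
  ∀ m ∈ P.support, ∀ i, m i ≤ 1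

/-- A harmonic polynomial: the sum of all partial derivatives vanishes. -/
def IsHarmonic {n : ℕ} (P : MvPolynomial (Fin n) ℝ) : Prop :=
  ∑ i, MvPolynomial.pderiv i P = 0

/-- A permutation-invariant probability measure on `ℝⁿ`. -/
def PermInvariant {n : ℕ} (μ : Measure (Fin n → ℝ)) : Prop :=
  ∀ π : Equiv.Perm (Fin n), Measure.map (fun x => x ∘ π) μ = μ

/-- The influence of the pair `(i,j)`: `Inf_{ij}[f] = ½ E_μ[(f^{(i j)} - f)²]`. -/
noncomputable def pairInf {n : ℕ} (μ : Measure (Fin n → ℝ))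
    (f : MvPolynomial (Fin n) ℝ) (i j : Fin n) : ℝ :=
  (1 / 2) * ∫ x, (eval x (MvPolynomial.rename (⇑(Equiv.swap i j)) f) - eval x f) ^ 2 ∂μ

/-- The total influence `Inf[f] = (1/n) ∑_{i<j} Inf_{ij}[f]`. -/
noncomputable def totalInf {n : ℕ} (μ : Measure (Fin n → ℝ))
    (f : MvPolynomial (Fin n) ℝ) : ℝ :=
  (1 / (n : ℝ)) * ∑ p ∈ Finset.univ.filter (fun p : Fin n × Fin n => p.1 < p.2),
    pairInf μ f p.1 p.2

/-!
Write the multilinear `f` as `∑_S c(S) x^S`; harmonicity says `∑_{b ∉ U} c(U ∪ {b}) = 0` for all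
`U`. Two consequences of this linear condition carry the proof. First, for `|S| = k` the swaps give
`∑_{i,j} (c(S) - c((i j) S)) = 2k(n + 1 - k) c(S)`, so the degree-`k` component `f_k` is an
eigenvector of `L = ∑_{i,j} (1 - (i j))` with eigenvalue `2k(n + 1 - k)`. Second, if `|T| < k`,
then for every `j` the sum of `c(S)` over `|S| = k`, `|S ∩ T| = j` vanishes (a two-term recursion
in `j`); as an exchangeable `μ` makes `E[x^S x^T]` depend only on `|S|` and `|S ∩ T|`, `f_k` is
orthogonal to all monomials of degree `< k`, so the components are orthogonal. Hence
`Var f = ∑_{k ≥ 1} ‖f_k‖²` and `Inf f = E[f · L f] / 2n = ∑_{k ≥ 1} k(n + 1 - k)/n · ‖f_k‖²`,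
while `1 ≤ k(n + 1 - k)/n ≤ d` for `1 ≤ k ≤ min(n, d)`.
-/

open Finset

theorem sum_mul_eq_zero_of_sum_fiber_eq_zero {ι κ R : Type*} [DecidableEq κ] [CommSemiring R]
    (s : Finset ι) (g : ι → κ) {c m : ι → R} (hc : ∀ y, ∑ x ∈ s with g x = y, c x = 0)
    (hm : ∀ x ∈ s, ∀ x' ∈ s, g x = g x' → m x = m x') : ∑ x ∈ s, c x * m x = 0 := by
  rw [← sum_fiberwise_of_maps_to fun x hx => mem_image_of_mem g hx]
  refine sum_eq_zero fun y hy => ?_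
  obtain ⟨x₀, hx₀, rfl⟩ := mem_image.1 hy
  rw [sum_congr rfl fun x hx => by rw [hm x (mem_filter.1 hx).1 x₀ hx₀ (mem_filter.1 hx).2],
    ← sum_mul, hc, zero_mul]

theorem sum_sum_eq_two_nsmul_sum_lt {ι M : Type*} [Fintype ι] [LinearOrder ι] [AddCommMonoid M]
    {F : ι → ι → M} (hsymm : ∀ i j, F i j = F j i) (hdiag : ∀ i, F i i = 0) :
    ∑ i, ∑ j, F i j = 2 • ∑ p : ι × ι with p.1 < p.2, F p.1 p.2 := by
  have split : ∀ p : ι × ι, F p.1 p.2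
      = (if p.1 < p.2 then F p.1 p.2 else 0) + if p.2 < p.1 then F p.1 p.2 else 0 := by
    rintro ⟨i, j⟩
    rcases lt_trichotomy i j with h | rfl | h
    · simp [h, h.not_gt]
    · simp [hdiag]
    · simp [h, h.not_gt]
  have flip : ∑ p : ι × ι, (if p.2 < p.1 then F p.1 p.2 else 0)
      = ∑ p : ι × ι, if p.1 < p.2 then F p.1 p.2 else 0 :=
    Fintype.sum_equiv (Equiv.prodComm ι ι) _ _ fun p => by
      simp only [Equiv.prodComm_apply, Prod.fst_swap, Prod.snd_swap, hsymm p.1]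
      congr
  rw [← Fintype.sum_prod_type', Fintype.sum_congr _ _ split, sum_add_distrib, flip, sum_filter,
    two_nsmul]

section Finsets

variable {α : Type*} [DecidableEq α]

theorem map_swap_of_mem_iff {S : Finset α} {i j : α} (h : i ∈ S ↔ j ∈ S) :
    S.map (Equiv.swap i j).toEmbedding = S := by
  ext x
  rw [mem_map_equiv, Equiv.symm_swap, Equiv.swap_apply_def]
  split_ifs with h₁ h₂ <;> subst_vars <;> tauto

theorem map_swap_of_mem_of_notMem {S : Finset α} {i j : α} (hi : i ∈ S) (hj : j ∉ S) :
    S.map (Equiv.swap i j).toEmbedding = insert j (S.erase i) := by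
  ext x
  rw [mem_map_equiv, Equiv.symm_swap, Equiv.swap_apply_def, mem_insert, mem_erase]
  split_ifs with h₁ h₂ <;> subst_vars <;> grind

theorem map_swap_map_swap (S : Finset α) (i j : α) :
    (S.map (Equiv.swap i j).toEmbedding).map (Equiv.swap i j).toEmbedding = S := by
  ext x
  simp only [mem_map_equiv, Equiv.symm_swap, Equiv.swap_apply_self]

theorem card_filter_card_erase_inter_eq (S T : Finset α) (j : ℕ) :
    #{a ∈ S | #(S.erase a ∩ T) = j} =
      (if #(S ∩ T) = j + 1 then j + 1 else 0) + if #(S ∩ T) = j then #(S \ T) else 0 := by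
  have h₁ : ∀ a ∈ S ∩ T, #(S.erase a ∩ T) = #(S ∩ T) - 1 := fun a ha => by
    rw [erase_inter, card_erase_of_mem ha]
  have h₂ : ∀ a ∈ S \ T, S.erase a ∩ T = S ∩ T := fun a ha => by
    rw [erase_inter, erase_eq_of_notMem fun h => (mem_sdiff.1 ha).2 (mem_inter.1 h).2]
  rw [card_filter, ← sum_filter_add_sum_filter_not S (· ∈ T), filter_mem_eq_inter,
    filter_notMem_eq_sdiff, sum_const_nat fun a ha => by rw [h₁ a ha],
    sum_const_nat fun a ha => by rw [h₂ a ha]]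
  congr 1 <;> split_ifs <;> omega

theorem exists_perm_of_card_inter_eq {S S' T : Finset α} (hin : #(S ∩ T) = #(S' ∩ T))
    (hout : #(S \ T) = #(S' \ T)) :
    ∃ π : Equiv.Perm α, (∀ x, π x ∈ T ↔ x ∈ T) ∧ ∀ x, π x ∈ S' ↔ x ∈ S := by
  obtain ⟨σ₁, h₁⟩ := Equiv.Perm.exists_map_finset_eq (S.subtype (· ∈ T)) (S'.subtype (· ∈ T))
    (by simpa only [card_subtype, filter_mem_eq_inter] using hin)
  obtain ⟨σ₂, h₂⟩ := Equiv.Perm.exists_map_finset_eq (S.subtype (· ∉ T)) (S'.subtype (· ∉ T))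
    (by simpa only [card_subtype, filter_notMem_eq_sdiff] using hout)
  refine ⟨σ₁.subtypeCongr σ₂, fun x => ?_, fun x => ?_⟩
  · by_cases hx : x ∈ T
    · rw [Equiv.Perm.subtypeCongr.left_apply _ _ hx]
      exact iff_of_true (σ₁ ⟨x, hx⟩).2 hx
    · rw [Equiv.Perm.subtypeCongr.right_apply _ _ hx]
      exact iff_of_false (σ₂ ⟨x, hx⟩).2 hx
  · by_cases hx : x ∈ T
    · have key : σ₁ ⟨x, hx⟩ ∈ S'.subtype (· ∈ T) ↔ ⟨x, hx⟩ ∈ S.subtype (· ∈ T) := by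
        rw [← h₁, mem_map_equiv, Equiv.symm_apply_apply]
      simpa [Equiv.Perm.subtypeCongr.left_apply _ _ hx] using key
    · have key : σ₂ ⟨x, hx⟩ ∈ S'.subtype (· ∉ T) ↔ ⟨x, hx⟩ ∈ S.subtype (· ∉ T) := by
        rw [← h₂, mem_map_equiv, Equiv.symm_apply_apply]
      simpa [Equiv.Perm.subtypeCongr.right_apply _ _ hx] using key

variable [Fintype α]

/-- For the coefficients `c` of a multilinear `∑_S c S • x^S`, this is the vanishing of the
coefficient of `x^U` in `∑ᵢ ∂ᵢ`. -/
def IsSetHarmonic {R : Type*} [AddCommMonoid R] (c : Finset α → R) : Prop :=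
  ∀ U, ∑ b ∈ Uᶜ, c (insert b U) = 0

theorem sum_sum_compl_eq_sum_sum_erase {M : Type*} [AddCommMonoid M] (G : Finset α → α → M) :
    ∑ U, ∑ b ∈ Uᶜ, G U b = ∑ S, ∑ a ∈ S, G (S.erase a) a := by
  rw [sum_sigma', sum_sigma']
  refine sum_nbij' (fun p => ⟨insert p.2 p.1, p.2⟩) (fun p => ⟨p.1.erase p.2, p.2⟩)
    ?_ ?_ ?_ ?_ ?_ <;> rintro ⟨U, b⟩ h <;> simp_all

variable {R : Type*} [CommRing R] {c : Finset α → R}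

theorem IsSetHarmonic.sum_mul_sum_erase (hc : IsSetHarmonic c) (w : Finset α → R) :
    ∑ S, c S * ∑ a ∈ S, w (S.erase a) = 0 := by
  have h := sum_sum_compl_eq_sum_sum_erase fun U b => w U * c (insert b U)
  simp only [← mul_sum, hc _, mul_zero, sum_const_zero] at h
  rw [h]
  simp_rw [mul_sum, mul_comm (c _)]
  exact sum_congr rfl fun S _ => sum_congr rfl fun a ha => by rw [insert_erase ha]

theorem IsSetHarmonic.sum_compl_insert_erase (hc : IsSetHarmonic c) {S : Finset α} {a : α}
    (ha : a ∈ S) : ∑ b ∈ Sᶜ, c (insert b (S.erase a)) = -c S := by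
  have h := hc (S.erase a)
  rwa [← insert_erase (mem_compl.2 (notMem_erase a S)), sum_insert (by simp [ha]),
    insert_erase ha, compl_erase, erase_insert (by simp [ha]), add_eq_zero_iff_eq_neg'] at h

theorem IsSetHarmonic.sum_sum_sub_map_swap (hc : IsSetHarmonic c) (S : Finset α) :
    ∑ i, ∑ j, (c S - c (S.map (Equiv.swap i j).toEmbedding)) = 2 * #S * (#Sᶜ + 1) * c S := by
  have key : ∀ a ∈ S, ∑ b ∈ Sᶜ, (c S - c (insert b (S.erase a))) = (#Sᶜ + 1) * c S := by
    intro a ha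
    rw [sum_sub_distrib, hc.sum_compl_insert_erase ha, sum_const, nsmul_eq_mul]
    ring
  have row_mem : ∀ i ∈ S, ∑ j, (c S - c (S.map (Equiv.swap i j).toEmbedding))
      = (#Sᶜ + 1) * c S := by
    intro i hi
    rw [← sum_add_sum_compl S, ← key i hi, sum_eq_zero fun j hj => by
      rw [map_swap_of_mem_iff (iff_of_true hi hj), sub_self], zero_add]
    exact sum_congr rfl fun j hj => by rw [map_swap_of_mem_of_notMem hi (mem_compl.1 hj)]
  have row_compl : ∀ i ∈ Sᶜ, ∑ j, (c S - c (S.map (Equiv.swap i j).toEmbedding))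
      = ∑ j ∈ S, (c S - c (insert i (S.erase j))) := by
    intro i hi
    rw [← sum_add_sum_compl S, sum_eq_zero (s := Sᶜ) fun j hj => by
      rw [map_swap_of_mem_iff (iff_of_false (mem_compl.1 hi) (mem_compl.1 hj)), sub_self],
      add_zero]
    exact sum_congr rfl fun j hj => by
      rw [Equiv.swap_comm, map_swap_of_mem_of_notMem hj (mem_compl.1 hi)]
  rw [← sum_add_sum_compl S, sum_congr rfl row_mem, sum_congr rfl row_compl, sum_comm,
    sum_congr rfl key, sum_const, nsmul_eq_mul]
  ring

theorem IsSetHarmonic.card_inter_sum_recurrence (hc : IsSetHarmonic c) (T : Finset α) (k j : ℕ) :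
    ((k : R) - j) * ∑ S with #S = k ∧ #(S ∩ T) = j, c S
      + ((j : R) + 1) * ∑ S with #S = k ∧ #(S ∩ T) = j + 1, c S = 0 := by
  have weight : ∀ S : Finset α, c S * ∑ a ∈ S, (if #(S.erase a) + 1 = k ∧ #(S.erase a ∩ T) = j
      then 1 else 0) = (if #S = k ∧ #(S ∩ T) = j then ((k : R) - j) * c S else 0)
        + if #S = k ∧ #(S ∩ T) = j + 1 then ((j : R) + 1) * c S else 0 := by
    intro S
    have hcard : ∀ a ∈ S, #(S.erase a) + 1 = #S := fun a ha => card_erase_add_one ha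
    have hsum : ∑ a ∈ S, (if #(S.erase a) + 1 = k ∧ #(S.erase a ∩ T) = j then (1 : R) else 0)
        = if #S = k then (#{a ∈ S | #(S.erase a ∩ T) = j} : R) else 0 := by
      rw [natCast_card_filter]
      split_ifs with hS
      · exact sum_congr rfl fun a ha => by simp only [hcard a ha, hS, true_and]
      · exact sum_eq_zero fun a ha => by simp only [hcard a ha, hS, false_and, if_false]
    rw [hsum, card_filter_card_erase_inter_eq]
    have hsd : (#(S \ T) : R) = #S - #(S ∩ T) := by
      rw [← card_sdiff_add_card_inter S T]; push_cast; ring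
    split_ifs <;> subst_vars <;> first | omega | (push_cast [hsd]; ring)
  -- harmonicity tested against the indicator of `{U | #U + 1 = k ∧ #(U ∩ T) = j}`
  have h := hc.sum_mul_sum_erase fun U => if #U + 1 = k ∧ #(U ∩ T) = j then 1 else 0
  rw [sum_congr rfl fun S _ => weight S, sum_add_distrib, ← sum_filter, ← sum_filter,
    ← mul_sum, ← mul_sum] at h
  exact h

theorem IsSetHarmonic.sum_card_inter_eq_zero [NoZeroDivisors R] [CharZero R]
    (hc : IsSetHarmonic c) {T : Finset α} {k : ℕ} (hT : #T < k) (j : ℕ) :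
    ∑ S with #S = k ∧ #(S ∩ T) = j, c S = 0 := by
  have large : ∀ j, #T < j → ∑ S with #S = k ∧ #(S ∩ T) = j, c S = 0 := fun j hj =>
    sum_eq_zero fun S hS =>
      absurd (mem_filter.1 hS).2.2 ((card_le_card inter_subset_right).trans_lt hj).ne
  rcases lt_or_ge (#T + 1) j with hj | hj
  · exact large j (by omega)
  -- downward from `#T + 1`; the factor `k - j` of the recursion is nonzero as `j ≤ #T < k`
  induction hj using Nat.decreasingInduction with
  | self => exact large _ (Nat.lt_succ_self _)
  | of_succ j hj ih =>
    have h := hc.card_inter_sum_recurrence T k j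
    rw [ih, mul_zero, add_zero] at h
    exact (mul_eq_zero.1 h).resolve_left (sub_ne_zero.2 (Nat.cast_injective.ne (by omega)))

end Finsets

section Polynomials

variable {α R : Type*}

section CommSemiring

variable [CommSemiring R]

theorem sum_homogeneousComponent_of_totalDegree_le {f : MvPolynomial α R} {d : ℕ}
    (hd : f.totalDegree ≤ d) :
    ∑ k ∈ range (d + 1), homogeneousComponent k f = f := by
  rw [← sum_subset (range_subset_range.2 (Nat.succ_le_succ hd)) fun k _ hk =>
    homogeneousComponent_eq_zero _ _ (by simpa using hk), sum_homogeneousComponent]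

theorem isHomogeneous_prod_X (S : Finset α) :
    (∏ i ∈ S, X i : MvPolynomial α R).IsHomogeneous #S := by
  simpa using IsHomogeneous.prod S (fun i => (X i : MvPolynomial α R)) (fun _ => 1)
    fun i _ => isHomogeneous_X R i

theorem prod_X_eq_monomial (S : Finset α) :
    (∏ i ∈ S, X i : MvPolynomial α R) = monomial (∑ i ∈ S, Finsupp.single i 1) 1 :=
  (monomial_sum_one S _).symm

noncomputable def setCoeff (f : MvPolynomial α R) (S : Finset α) : R :=
  coeff (∑ i ∈ S, Finsupp.single i 1) f

theorem rename_prod_X_eq {π : Equiv.Perm α} {S S' : Finset α} (h : ∀ x, π x ∈ S' ↔ x ∈ S) :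
    rename π (∏ i ∈ S, X i : MvPolynomial α R) = ∏ i ∈ S', X i := by
  rw [map_prod]
  exact prod_equiv π (fun x => (h x).symm) fun _ _ => rename_X _ _

variable [DecidableEq α]

theorem rename_swap_prod_X (i j : α) (S : Finset α) :
    rename (Equiv.swap i j) (∏ k ∈ S, X k : MvPolynomial α R)
      = ∏ k ∈ S.map (Equiv.swap i j).toEmbedding, X k :=
  rename_prod_X_eq fun x => by rw [mem_map_equiv, Equiv.symm_swap, Equiv.swap_apply_self]

def IsPermInvariant (E : MvPolynomial α R →ₗ[R] R) : Prop :=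
  ∀ (π : Equiv.Perm α) P, E (rename π P) = E P

variable {E : MvPolynomial α R →ₗ[R] R}

theorem IsPermInvariant.map_prod_X_mul_prod_X_eq (hE : IsPermInvariant E) {S S' T : Finset α}
    (hin : #(S ∩ T) = #(S' ∩ T)) (hout : #(S \ T) = #(S' \ T)) :
    E ((∏ i ∈ S, X i) * ∏ i ∈ T, X i) = E ((∏ i ∈ S', X i) * ∏ i ∈ T, X i) := by
  obtain ⟨π, hT, hS⟩ := exists_perm_of_card_inter_eq hin hout
  rw [← hE π, map_mul, rename_prod_X_eq hS, rename_prod_X_eq hT]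

end CommSemiring

variable [CommRing R] [DecidableEq α] [Fintype α] {E : MvPolynomial α R →ₗ[R] R}
  {c : Finset α → R}

noncomputable def swapLaplacian : MvPolynomial α R →ₗ[R] MvPolynomial α R :=
  ∑ i, ∑ j, (LinearMap.id - (rename (Equiv.swap i j)).toLinearMap)

theorem swapLaplacian_apply (P : MvPolynomial α R) :
    swapLaplacian P = ∑ i, ∑ j, (P - rename (Equiv.swap i j) P) := by
  simp [swapLaplacian, LinearMap.sum_apply]

theorem IsSetHarmonic.swapLaplacian_sum_eq_smul (hc : IsSetHarmonic c) (k : ℕ) :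
    swapLaplacian (∑ S with #S = k, c S • (∏ i ∈ S, X i : MvPolynomial α R))
      = (2 * (k : R) * (Fintype.card α + 1 - k)) • ∑ S with #S = k, c S • ∏ i ∈ S, X i := by
  have reindex : ∀ i j : α,
      ∑ S with #S = k, c S • (∏ l ∈ S.map (Equiv.swap i j).toEmbedding, X l : MvPolynomial α R)
      = ∑ S with #S = k, c (S.map (Equiv.swap i j).toEmbedding) • ∏ l ∈ S, X l := fun i j =>
    sum_nbij' (·.map (Equiv.swap i j).toEmbedding) (·.map (Equiv.swap i j).toEmbedding)
      (by simp) (by simp) (fun S _ => map_swap_map_swap S i j)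
      (fun S _ => map_swap_map_swap S i j) (fun S _ => by rw [map_swap_map_swap])
  calc _ = ∑ i, ∑ j, ∑ S with #S = k, (c S - c (S.map (Equiv.swap i j).toEmbedding))
        • (∏ l ∈ S, X l : MvPolynomial α R) := by
        rw [swapLaplacian_apply]
        refine sum_congr rfl fun i _ => sum_congr rfl fun j _ => ?_
        simp only [map_sum, map_smul, rename_swap_prod_X]
        rw [reindex, ← sum_sub_distrib]
        simp only [sub_smul]
    _ = ∑ S with #S = k, (∑ i, ∑ j, (c S - c (S.map (Equiv.swap i j).toEmbedding)))
        • (∏ l ∈ S, X l : MvPolynomial α R) := by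
        simp only [sum_smul]
        exact (sum_congr rfl fun i _ => sum_comm).trans sum_comm
    _ = _ := by
        rw [smul_sum]
        refine sum_congr rfl fun S hS => ?_
        rw [hc.sum_sum_sub_map_swap, smul_smul, card_compl, Nat.cast_sub (card_le_univ S),
          (mem_filter.1 hS).2]
        ring_nf

theorem IsSetHarmonic.map_sum_mul_prod_X_eq_zero [NoZeroDivisors R] [CharZero R]
    (hE : IsPermInvariant E) (hc : IsSetHarmonic c) {T : Finset α} {k : ℕ} (hT : #T < k) :
    E ((∑ S with #S = k, c S • ∏ i ∈ S, X i) * ∏ i ∈ T, X i) = 0 := by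
  simp only [sum_mul, map_sum, smul_mul_assoc, map_smul, smul_eq_mul]
  refine sum_mul_eq_zero_of_sum_fiber_eq_zero _ (fun S => #(S ∩ T)) (fun j => ?_)
    fun S hS S' hS' h => hE.map_prod_X_mul_prod_X_eq h ?_
  · rw [filter_filter]
    exact hc.sum_card_inter_eq_zero hT j
  · have := card_sdiff_add_card_inter S T
    have := card_sdiff_add_card_inter S' T
    have := (mem_filter.1 hS).2
    have := (mem_filter.1 hS').2
    omega

end Polynomials

section Multilinear

variable {n : ℕ} {f : MvPolynomial (Fin n) ℝ}

theorem IsMultilinear.coeff_eq_zero (hf : IsMultilinear f) {m : Fin n →₀ ℕ} {i : Fin n}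
    (hm : 1 < m i) : coeff m f = 0 :=
  notMem_support_iff.1 fun h => (hf m h i).not_gt hm

theorem IsMultilinear.eq_sum_setCoeff (hf : IsMultilinear f) :
    f = ∑ S, setCoeff f S • ∏ i ∈ S, X i := by
  have hind : ∀ m ∈ f.support, ∑ i ∈ m.support, Finsupp.single i 1 = m := fun m hm => by
    ext i
    have := hf m hm i
    simp only [Finsupp.coe_finsetSum, Finset.sum_apply, Finsupp.single_apply, sum_ite_eq',
      Finsupp.mem_support_iff]
    split_ifs <;> omega
  have hinj : Function.Injective fun S : Finset (Fin n) => ∑ i ∈ S, Finsupp.single i 1 :=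
    fun S T h => by simpa using congrArg Finsupp.toMultiset h
  calc f = ∑ m ∈ f.support, monomial m (coeff m f) := f.as_sum
    _ = ∑ m ∈ univ.image fun S : Finset (Fin n) => ∑ i ∈ S, Finsupp.single i 1,
          monomial m (coeff m f) :=
        sum_subset (fun m hm => mem_image.2 ⟨m.support, mem_univ _, hind m hm⟩)
          fun m _ hm => by rw [notMem_support_iff.1 hm, monomial_zero]
    _ = _ := by
        rw [sum_image fun S _ T _ h => hinj h]
        refine sum_congr rfl fun S _ => ?_
        rw [prod_X_eq_monomial, smul_monomial, smul_eq_mul, mul_one, setCoeff]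

theorem IsMultilinear.homogeneousComponent_eq (hf : IsMultilinear f) (k : ℕ) :
    homogeneousComponent k f = ∑ S with #S = k, setCoeff f S • ∏ i ∈ S, X i := by
  conv_lhs => rw [hf.eq_sum_setCoeff]
  rw [map_sum, sum_filter]
  refine sum_congr rfl fun S _ => ?_
  rw [map_smul, homogeneousComponent_of_mem (isHomogeneous_prod_X S)]
  split_ifs <;> simp_all [eq_comm]

theorem IsMultilinear.homogeneousComponent_eq_zero_of_lt (hf : IsMultilinear f) {k : ℕ}
    (hk : n < k) : homogeneousComponent k f = 0 := by
  rw [hf.homogeneousComponent_eq, filter_false_of_mem fun S _ hS => ?_, sum_empty]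
  have := card_le_univ S
  simp only [Fintype.card_fin] at this
  omega

theorem IsMultilinear.isSetHarmonic_setCoeff (hml : IsMultilinear f) (hh : IsHarmonic f) :
    IsSetHarmonic (setCoeff f) := by
  intro U
  have h := congrArg (coeff (∑ i ∈ U, Finsupp.single i 1)) hh
  simp only [coeff_sum, coeff_zero, coeff_pderiv] at h
  rw [← sum_add_sum_compl U, sum_eq_zero fun i hi => ?_, zero_add] at h
  · rw [← h]
    refine sum_congr rfl fun b hb => ?_
    have hb' := mem_compl.1 hb
    rw [setCoeff, sum_insert hb', add_comm]
    simp [Finsupp.single_apply, hb']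
  · rw [hml.coeff_eq_zero (i := i), zero_mul]
    simp [Finsupp.single_apply, hi]

variable {E : MvPolynomial (Fin n) ℝ →ₗ[ℝ] ℝ}

theorem IsPermInvariant.map_homogeneousComponent_mul_prod_X_eq_zero (hE : IsPermInvariant E)
    (hml : IsMultilinear f) (hh : IsHarmonic f) {T : Finset (Fin n)} {k : ℕ} (hT : #T < k) :
    E (homogeneousComponent k f * ∏ i ∈ T, X i) = 0 := by
  rw [hml.homogeneousComponent_eq]
  exact (hml.isSetHarmonic_setCoeff hh).map_sum_mul_prod_X_eq_zero hE hT

theorem IsPermInvariant.map_homogeneousComponent_mul_eq_zero (hE : IsPermInvariant E)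
    (hml : IsMultilinear f) (hh : IsHarmonic f) {k l : ℕ} (hlk : l < k) :
    E (homogeneousComponent k f * homogeneousComponent l f) = 0 := by
  rw [hml.homogeneousComponent_eq l, mul_sum, map_sum]
  refine sum_eq_zero fun T hT => ?_
  rw [mul_smul_comm, map_smul, hE.map_homogeneousComponent_mul_prod_X_eq_zero hml hh
    ((mem_filter.1 hT).2.trans_lt hlk), smul_zero]

theorem IsPermInvariant.map_homogeneousComponent_mul_self (hE : IsPermInvariant E)
    (hml : IsMultilinear f) (hh : IsHarmonic f) (k : ℕ) :
    E (homogeneousComponent k f * f) = E (homogeneousComponent k f * homogeneousComponent k f) := by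
  have expand : homogeneousComponent k f * f
      = ∑ l ∈ range (f.totalDegree + 1), homogeneousComponent k f * homogeneousComponent l f := by
    rw [← mul_sum, sum_homogeneousComponent]
  rw [expand, map_sum, sum_eq_single k]
  · intro l _ hlk
    rcases hlk.lt_or_gt with h | h
    · exact hE.map_homogeneousComponent_mul_eq_zero hml hh h
    · rw [mul_comm]
      exact hE.map_homogeneousComponent_mul_eq_zero hml hh h
  · intro hk
    rw [homogeneousComponent_eq_zero _ _ (by simpa using hk), zero_mul, map_zero]

theorem IsPermInvariant.map_mul_self_eq_sum (hE : IsPermInvariant E) (hml : IsMultilinear f)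
    (hh : IsHarmonic f) {d : ℕ} (hdeg : f.totalDegree ≤ d) :
    E (f * f) = ∑ k ∈ range (d + 1), E (homogeneousComponent k f * homogeneousComponent k f) := by
  have expand : f * f = ∑ k ∈ range (d + 1), homogeneousComponent k f * f := by
    rw [← sum_mul, sum_homogeneousComponent_of_totalDegree_le hdeg]
  rw [expand, map_sum]
  exact sum_congr rfl fun k _ => hE.map_homogeneousComponent_mul_self hml hh k

theorem IsPermInvariant.map_eq_coeff_zero (hE : IsPermInvariant E) (hml : IsMultilinear f)
    (hh : IsHarmonic f) (h1 : E 1 = 1) : E f = coeff 0 f := by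
  conv_lhs => rw [← sum_homogeneousComponent f]
  rw [map_sum, sum_eq_single_of_mem 0 (by simp)]
  · rw [homogeneousComponent_zero, C_eq_smul_one, map_smul, h1, smul_eq_mul, mul_one]
  · intro k _ hk
    simpa using hE.map_homogeneousComponent_mul_prod_X_eq_zero hml hh (T := ∅)
      (Nat.pos_of_ne_zero hk)

theorem IsMultilinear.swapLaplacian_eq (hml : IsMultilinear f) (hh : IsHarmonic f) {d : ℕ}
    (hdeg : f.totalDegree ≤ d) :
    swapLaplacian f
      = ∑ k ∈ range (d + 1), (2 * (k : ℝ) * (n + 1 - k)) • homogeneousComponent k f := by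
  conv_lhs => rw [← sum_homogeneousComponent_of_totalDegree_le hdeg]
  rw [map_sum]
  refine sum_congr rfl fun k _ => ?_
  rw [hml.homogeneousComponent_eq, (hml.isSetHarmonic_setCoeff hh).swapLaplacian_sum_eq_smul,
    Fintype.card_fin]

theorem IsPermInvariant.map_swapLaplacian_mul_self (hE : IsPermInvariant E)
    (hml : IsMultilinear f) (hh : IsHarmonic f) {d : ℕ} (hdeg : f.totalDegree ≤ d) :
    E (swapLaplacian f * f) = ∑ k ∈ range (d + 1),
      2 * (k : ℝ) * (n + 1 - k) * E (homogeneousComponent k f * homogeneousComponent k f) := by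
  rw [hml.swapLaplacian_eq hh hdeg, sum_mul, map_sum]
  refine sum_congr rfl fun k _ => ?_
  rw [smul_mul_assoc, map_smul, hE.map_homogeneousComponent_mul_self hml hh, smul_eq_mul]

end Multilinear

section Expectation

variable {σ : Type*} (μ : Measure (σ → ℝ))
  (hint : ∀ P : MvPolynomial σ ℝ, Integrable (fun x => eval x P) μ)

noncomputable def polyExpectation : MvPolynomial σ ℝ →ₗ[ℝ] ℝ where
  toFun P := ∫ x, eval x P ∂μ
  map_add' P Q := by
    simp only [map_add]
    exact integral_add (hint P) (hint Q)
  map_smul' a P := by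
    simp only [smul_eval, RingHom.id_apply, smul_eq_mul]
    exact integral_const_mul a _

theorem polyExpectation_apply (P : MvPolynomial σ ℝ) :
    polyExpectation μ hint P = ∫ x, eval x P ∂μ := rfl

theorem isPermInvariant_polyExpectation [Countable σ]
    (hμ : ∀ π : Equiv.Perm σ, Measure.map (fun x => x ∘ π) μ = μ) :
    IsPermInvariant (polyExpectation μ hint) := by
  intro π P
  have hπ : Measurable fun x : σ → ℝ => x ∘ π :=
    measurable_pi_lambda _ fun i => measurable_pi_apply (π i)
  rw [polyExpectation_apply, polyExpectation_apply]
  simp only [eval_rename]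
  rw [← integral_map hπ.aemeasurable (continuous_eval P).aestronglyMeasurable, hμ]

theorem polyExpectation_one [IsProbabilityMeasure μ] : polyExpectation μ hint 1 = 1 := by
  simp [polyExpectation_apply]

theorem polyExpectation_mul_self_nonneg (P : MvPolynomial σ ℝ) :
    0 ≤ polyExpectation μ hint (P * P) :=
  integral_nonneg fun x => by simpa using mul_self_nonneg (eval x P)

end Expectation

section Influence

variable {n : ℕ} (μ : Measure (Fin n → ℝ))
  (hint : ∀ P : MvPolynomial (Fin n) ℝ, Integrable (fun x => eval x P) μ)
  {f : MvPolynomial (Fin n) ℝ}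

theorem pairInf_eq_polyExpectation (hinv : PermInvariant μ) (i j : Fin n) :
    pairInf μ f i j = polyExpectation μ hint ((f - rename (Equiv.swap i j) f) * f) := by
  set E := polyExpectation μ hint
  set g := rename (Equiv.swap i j) f
  have hg : E (g * g) = E (f * f) := by
    rw [← map_mul]
    exact isPermInvariant_polyExpectation μ hint hinv _ _
  have hpair : pairInf μ f i j = 1 / 2 * E ((g - f) * (g - f)) := by
    simp only [pairInf, E, g, polyExpectation_apply, map_mul, map_sub, sq]
  have expand : (g - f) * (g - f) = g * g - g * f - g * f + f * f := by ring
  rw [hpair, expand, sub_mul, map_add, map_sub, map_sub, map_sub, hg]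
  ring

theorem totalInf_eq (hinv : PermInvariant μ) (hml : IsMultilinear f) (hh : IsHarmonic f)
    {d : ℕ} (hdeg : f.totalDegree ≤ d) :
    totalInf μ f = ∑ k ∈ range d, ((k : ℝ) + 1) * (n - k) / n * polyExpectation μ hint
      (homogeneousComponent (k + 1) f * homogeneousComponent (k + 1) f) := by
  have symm : ∀ i j, pairInf μ f i j = pairInf μ f j i := fun i j => by
    rw [pairInf, pairInf, Equiv.swap_comm]
  have diag : ∀ i, pairInf μ f i i = 0 := fun i => by simp [pairInf]
  have half : ∑ p : Fin n × Fin n with p.1 < p.2, pairInf μ f p.1 p.2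
      = 1 / 2 * polyExpectation μ hint (swapLaplacian f * f) := by
    rw [swapLaplacian_apply, sum_mul, map_sum]
    simp only [sum_mul, map_sum, ← pairInf_eq_polyExpectation μ hint hinv]
    rw [sum_sum_eq_two_nsmul_sum_lt symm diag, nsmul_eq_mul]
    ring
  rw [totalInf, half, (isPermInvariant_polyExpectation μ hint hinv).map_swapLaplacian_mul_self
    hml hh hdeg, sum_range_succ']
  simp only [CharP.cast_eq_zero, mul_zero, zero_mul, add_zero]
  rw [mul_sum, mul_sum]
  refine sum_congr rfl fun k _ => ?_
  push_cast
  ring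

theorem variance_eq [IsProbabilityMeasure μ] (hinv : PermInvariant μ) (hml : IsMultilinear f)
    (hh : IsHarmonic f) {d : ℕ} (hdeg : f.totalDegree ≤ d) :
    (∫ x, (eval x f) ^ 2 ∂μ) - (∫ x, eval x f ∂μ) ^ 2 = ∑ k ∈ range d,
      polyExpectation μ hint (homogeneousComponent (k + 1) f * homogeneousComponent (k + 1) f) := by
  have hE := isPermInvariant_polyExpectation μ hint hinv
  have hsq : ∫ x, (eval x f) ^ 2 ∂μ = polyExpectation μ hint (f * f) := by
    simp only [polyExpectation_apply, map_mul, sq]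
  have hmean : ∫ x, eval x f ∂μ = coeff 0 f :=
    hE.map_eq_coeff_zero hml hh (polyExpectation_one μ hint)
  have hconst : polyExpectation μ hint (homogeneousComponent 0 f * homogeneousComponent 0 f)
      = coeff 0 f ^ 2 := by
    rw [homogeneousComponent_zero, ← C_mul, C_eq_smul_one, map_smul, polyExpectation_one,
      smul_eq_mul, mul_one, sq]
  rw [hsq, hmean, hE.map_mul_self_eq_sum hml hh hdeg, sum_range_succ', hconst,
    add_sub_cancel_right]

end Influence

theorem succ_mul_sub_div_mem_Icc {n k d : ℕ} (hkn : k < n) (hkd : k < d) :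
    ((k : ℝ) + 1) * (n - k) / n ∈ Set.Icc 1 (d : ℝ) := by
  have hkn' : (k : ℝ) + 1 ≤ n := by exact_mod_cast hkn
  have hkd' : (k : ℝ) + 1 ≤ d := by exact_mod_cast hkd
  have hn : (0 : ℝ) < n := by exact_mod_cast k.zero_le.trans_lt hkn
  constructor
  · rw [le_div_iff₀ hn]
    nlinarith
  · rw [div_le_iff₀ hn]
    nlinarith

/-- Poincaré inequality: for a harmonic multilinear polynomial of degree at most `d`,
`Var[f] ≤ Inf[f] ≤ d · Var[f]`. -/
theorem poincare_inequality {n d : ℕ} (μ : Measure (Fin n → ℝ))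
    [IsProbabilityMeasure μ] (hinv : PermInvariant μ)
    (hint : ∀ P : MvPolynomial (Fin n) ℝ, Integrable (fun x => eval x P) μ)
    (f : MvPolynomial (Fin n) ℝ) (hml : IsMultilinear f) (hh : IsHarmonic f)
    (hdeg : f.totalDegree ≤ d) :
    ((∫ x, (eval x f) ^ 2 ∂μ) - (∫ x, eval x f ∂μ) ^ 2 ≤ totalInf μ f) ∧
    totalInf μ f ≤ (d : ℝ) * ((∫ x, (eval x f) ^ 2 ∂μ) - (∫ x, eval x f ∂μ) ^ 2) := by
  have weight : ∀ k ∈ range d, polyExpectation μ hint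
      (homogeneousComponent (k + 1) f * homogeneousComponent (k + 1) f) = 0
      ∨ ((k : ℝ) + 1) * (n - k) / n ∈ Set.Icc 1 (d : ℝ) := by
    intro k hk
    refine or_iff_not_imp_left.2 fun hv => succ_mul_sub_div_mem_Icc ?_ (mem_range.1 hk)
    by_contra hkn
    rw [hml.homogeneousComponent_eq_zero_of_lt (by omega), zero_mul, map_zero] at hv
    exact hv rfl
  have hv := polyExpectation_mul_self_nonneg μ hint
  rw [variance_eq μ hint hinv hml hh hdeg, totalInf_eq μ hint hinv hml hh hdeg, mul_sum]
  constructor <;> refine sum_le_sum fun k hk => ?_ <;> rcases weight k hk with h | ⟨h₁, h₂⟩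
  · rw [h, mul_zero]
  · exact le_mul_of_one_le_left (hv _) h₁
  · rw [h, mul_zero, mul_zero]
  · exact mul_le_mul_of_nonneg_right h₂ (hv _)
end

section
/- Let n, k be integers with 1 ≤ k ≤ n/2, and let M be a real matrix whose rows and columns are indexed by the k-element subsets of [n] such that M(S,T) depends only on |S ∩ T|. Then for every d ≤ k there exists a real number λ_d(M) such that for every top set B of length d in [n], the restriction of χ_B to the slice (viewed as a vector indexed by k-element subsets of [n] via their indicator vectors) satisfies M·χ_B = λ_d(M)·χ_B; in particular every such χ_B is an eigenvector of M with eigenvalue depending only on d. -/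
open MvPolynomial

/-- The slice `{x ∈ {0,1}ⁿ : ∑ x_i = k}`, identified with `k`-element subsets of `[n]`. -/
def Slice (n k : ℕ) := {S : Finset (Fin n) // S.card = k}

noncomputable instance (n k : ℕ) : Fintype (Slice n k) := by
  unfold Slice; infer_instance

/-- Restriction of a polynomial to the slice, via indicator vectors. -/
noncomputable def toSlice {n : ℕ} (k : ℕ) (P : MvPolynomial (Fin n) ℝ) :
    Slice n k → ℝ :=
  fun S => eval (fun i => if i ∈ S.1 then (1 : ℝ) else 0) P

open Finset

section Phi
variable {n d : ℕ} {A B : Fin d → Fin n}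

noncomputable def phi (A B : Fin d → Fin n) (T : Finset (Fin n)) : ℝ :=
  ∏ m, ((if A m ∈ T then (1:ℝ) else 0) - (if B m ∈ T then (1:ℝ) else 0))

lemma phi_insert_of_notmem {i : Fin n} (h : ∀ m, A m ≠ i ∧ B m ≠ i) (R : Finset (Fin n)) :
    phi A B (insert i R) = phi A B R := by
  unfold phi
  refine Finset.prod_congr rfl fun m _ => ?_
  have h1 : (A m ∈ insert i R) ↔ A m ∈ R := by simp [Finset.mem_insert, (h m).1]
  have h2 : (B m ∈ insert i R) ↔ B m ∈ R := by simp [Finset.mem_insert, (h m).2]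
  rw [if_congr h1 rfl rfl, if_congr h2 rfl rfl]

lemma phi_eq_zero_of_both {m : Fin d} {T : Finset (Fin n)} (h1 : A m ∈ T) (h2 : B m ∈ T) :
    phi A B T = 0 := by
  apply Finset.prod_eq_zero (Finset.mem_univ m); rw [if_pos h1, if_pos h2]; ring

lemma phi_eq_zero_of_neither {m : Fin d} {T : Finset (Fin n)} (h1 : A m ∉ T) (h2 : B m ∉ T) :
    phi A B T = 0 := by
  apply Finset.prod_eq_zero (Finset.mem_univ m); rw [if_neg h1, if_neg h2]; ring

lemma phi_down (hA : Function.Injective A) (hB : Function.Injective B)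
    (hAB : ∀ i j, A i ≠ B j) (R : Finset (Fin n)) :
    ∑ i ∈ Rᶜ, phi A B (insert i R) = ((n:ℝ) - R.card - d) * phi A B R := by
  classical
  set P : Finset (Fin n) := (univ.image A) ∪ (univ.image B) with hP
  by_cases hall : ∀ m, (A m ∈ R ↔ B m ∉ R)
  · -- every pair has exactly one element in R
    rw [← Finset.sum_filter_add_sum_filter_not Rᶜ (· ∈ P)]
    have hz : ∑ i ∈ Rᶜ.filter (· ∈ P), phi A B (insert i R) = 0 := by
      apply Finset.sum_eq_zero
      intro i hi
      rw [Finset.mem_filter, Finset.mem_compl] at hi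
      obtain ⟨hiR, hiP⟩ := hi
      rw [hP, Finset.mem_union] at hiP
      rcases hiP with h | h
      · obtain ⟨m, -, hm⟩ := Finset.mem_image.1 h
        have hBm : B m ∈ R := by
          by_contra hc
          exact hiR (hm ▸ (hall m).2 hc)
        exact phi_eq_zero_of_both (m := m) (hm ▸ Finset.mem_insert_self i R)
          (Finset.mem_insert_of_mem hBm)
      · obtain ⟨m, -, hm⟩ := Finset.mem_image.1 h
        have hAm : A m ∈ R := by
          by_contra hc
          exact (hm ▸ fun hh => hiR hh : B m ∉ R) ((hall m).not_left.mp hc)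
        exact phi_eq_zero_of_both (m := m) (Finset.mem_insert_of_mem hAm)
          (hm ▸ Finset.mem_insert_self i R)
    have hc : ∑ i ∈ Rᶜ.filter (· ∉ P), phi A B (insert i R)
        = (Rᶜ.filter (· ∉ P)).card * phi A B R := by
      rw [Finset.sum_congr rfl (fun i hi => ?_), Finset.sum_const, nsmul_eq_mul]
      rw [Finset.mem_filter] at hi
      refine phi_insert_of_notmem (fun m => ⟨?_, ?_⟩) R
      · intro h; exact hi.2 (hP ▸ Finset.mem_union_left _ (Finset.mem_image.2 ⟨m, Finset.mem_univ m, h⟩))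
      · intro h; exact hi.2 (hP ▸ Finset.mem_union_right _ (Finset.mem_image.2 ⟨m, Finset.mem_univ m, h⟩))
    rw [hz, hc, zero_add]
    -- count: |Rᶜ ∩ P| = d
    have himg : Rᶜ ∩ P = univ.image (fun m => if A m ∈ R then B m else A m) := by
      ext i
      simp only [Finset.mem_inter, Finset.mem_compl, Finset.mem_image, Finset.mem_univ,
        true_and, hP, Finset.mem_union]
      constructor
      · rintro ⟨hiR, ⟨m, hm⟩ | ⟨m, hm⟩⟩
        · refine ⟨m, ?_⟩
          have : A m ∉ R := hm ▸ hiR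
          rw [if_neg this, hm]
        · refine ⟨m, ?_⟩
          have hBm : B m ∉ R := hm ▸ hiR
          have : A m ∈ R := (hall m).2 hBm
          rw [if_pos this, hm]
      · rintro ⟨m, hm⟩
        by_cases hAm : A m ∈ R
        · rw [if_pos hAm] at hm
          exact ⟨hm ▸ (hall m).1 hAm, Or.inr ⟨m, hm⟩⟩
        · rw [if_neg hAm] at hm
          exact ⟨hm ▸ hAm, Or.inl ⟨m, hm⟩⟩
    have hginj : Function.Injective (fun m => if A m ∈ R then B m else A m) := by
      intro a b hab
      dsimp only at hab
      by_cases ha : A a ∈ R <;> by_cases hb : A b ∈ R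
      · rw [if_pos ha, if_pos hb] at hab; exact hB hab
      · rw [if_pos ha, if_neg hb] at hab; exact absurd hab.symm (hAB b a)
      · rw [if_neg ha, if_pos hb] at hab; exact absurd hab (hAB a b)
      · rw [if_neg ha, if_neg hb] at hab; exact hA hab
    have hcard : (Rᶜ ∩ P).card = d := by
      rw [himg, Finset.card_image_of_injective _ hginj, Finset.card_univ, Fintype.card_fin]
    have hfilter : Rᶜ.filter (· ∉ P) = Rᶜ \ P := by
      ext i; simp [Finset.mem_sdiff, Finset.mem_filter, and_comm]
    have hRc : Rᶜ.card = n - R.card := by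
      rw [Finset.card_compl, Fintype.card_fin]
    have hRn : R.card ≤ n := by
      simpa using Finset.card_le_card (Finset.subset_univ R)
    have hsum := Finset.card_sdiff_add_card_inter Rᶜ P
    have hdle : d ≤ Rᶜ.card := by
      rw [← hcard]; exact Finset.card_le_card Finset.inter_subset_left
    have hcd : (Rᶜ \ P).card = n - R.card - d := by omega
    rw [hfilter, hcd]
    congr 1
    rw [Nat.sub_sub, Nat.cast_sub (by omega : R.card + d ≤ n)]
    push_cast; ring
  · -- some pair is not split by R
    push_neg at hall
    obtain ⟨m₀, hm₀⟩ := hall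
    by_cases hboth : ∃ m, A m ∈ R ∧ B m ∈ R
    · obtain ⟨m, hm1, hm2⟩ := hboth
      rw [phi_eq_zero_of_both hm1 hm2, mul_zero]
      exact Finset.sum_eq_zero fun i _ =>
        phi_eq_zero_of_both (Finset.mem_insert_of_mem hm1) (Finset.mem_insert_of_mem hm2)
    · have hne : A m₀ ∉ R ∧ B m₀ ∉ R := by
        rcases hm₀ with ⟨h1, h2⟩ | h
        · exact absurd ⟨m₀, h1, h2⟩ hboth
        · exact h
      rw [phi_eq_zero_of_neither hne.1 hne.2, mul_zero]
      by_cases htwo : ∃ m₁, m₁ ≠ m₀ ∧ A m₁ ∉ R ∧ B m₁ ∉ R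
      · obtain ⟨m₁, hm10, hA1, hB1⟩ := htwo
        refine Finset.sum_eq_zero fun i _ => ?_
        by_cases hi : i = A m₀ ∨ i = B m₀
        · refine phi_eq_zero_of_neither (m := m₁) ?_ ?_
          · rw [Finset.mem_insert]
            rintro (h | h)
            · rcases hi with hi | hi
              · exact hm10 (hA (h.trans hi))
              · exact hAB m₁ m₀ (h.trans hi)
            · exact hA1 h
          · rw [Finset.mem_insert]
            rintro (h | h)
            · rcases hi with hi | hi
              · exact hAB m₀ m₁ (hi ▸ h).symm
              · exact hm10 (hB (h.trans hi))
            · exact hB1 h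
        · push_neg at hi
          refine phi_eq_zero_of_neither (m := m₀) ?_ ?_
          · rw [Finset.mem_insert]
            rintro (h | h)
            · exact hi.1 h.symm
            · exact hne.1 h
          · rw [Finset.mem_insert]
            rintro (h | h)
            · exact hi.2 h.symm
            · exact hne.2 h
      · -- m₀ is the unique unsplit pair; the two surviving terms cancel
        push_neg at htwo
        have hAB0 : A m₀ ≠ B m₀ := hAB m₀ m₀
        have hsub : ({A m₀, B m₀} : Finset (Fin n)) ⊆ Rᶜ := by
          intro i hi
          rw [Finset.mem_insert, Finset.mem_singleton] at hi
          rw [Finset.mem_compl]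
          rcases hi with h | h
          · exact h ▸ hne.1
          · exact h ▸ hne.2
        rw [← Finset.sum_subset hsub (fun i hi hni => ?_)]
        · rw [Finset.sum_pair hAB0]
          have hfac : ∀ m, m ≠ m₀ →
              ∀ i, (i = A m₀ ∨ i = B m₀) →
              ((if A m ∈ insert i R then (1:ℝ) else 0) - (if B m ∈ insert i R then (1:ℝ) else 0))
              = ((if A m ∈ R then (1:ℝ) else 0) - (if B m ∈ R then (1:ℝ) else 0)) := by
            intro m hm i hi
            have h1 : (A m ∈ insert i R) ↔ A m ∈ R := by
              rw [Finset.mem_insert]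
              constructor
              · rintro (h | h)
                · rcases hi with hi | hi
                  · exact absurd (hA (h.trans hi)) hm
                  · exact absurd (h.trans hi) (hAB m m₀)
                · exact h
              · exact Or.inr
            have h2 : (B m ∈ insert i R) ↔ B m ∈ R := by
              rw [Finset.mem_insert]
              constructor
              · rintro (h | h)
                · rcases hi with hi | hi
                  · exact absurd (hi ▸ h).symm (hAB m₀ m)
                  · exact absurd (hB (h.trans hi)) hm
                · exact h
              · exact Or.inr
            rw [if_congr h1 rfl rfl, if_congr h2 rfl rfl]
          have e1 : phi A B (insert (A m₀) R)
              = ∏ m ∈ univ.erase m₀, ((if A m ∈ R then (1:ℝ) else 0) - (if B m ∈ R then 1 else 0)) := by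
            unfold phi
            rw [← Finset.mul_prod_erase univ _ (Finset.mem_univ m₀)]
            have hm0fac : ((if A m₀ ∈ insert (A m₀) R then (1:ℝ) else 0)
                - (if B m₀ ∈ insert (A m₀) R then 1 else 0)) = 1 := by
              rw [if_pos (Finset.mem_insert_self _ _), if_neg (by
                rw [Finset.mem_insert]; rintro (h | h)
                · exact hAB0 h.symm
                · exact hne.2 h)]
              ring
            rw [hm0fac, one_mul]
            exact Finset.prod_congr rfl fun m hm =>
              hfac m (Finset.mem_erase.1 hm).1 _ (Or.inl rfl)
          have e2 : phi A B (insert (B m₀) R)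
              = -∏ m ∈ univ.erase m₀, ((if A m ∈ R then (1:ℝ) else 0) - (if B m ∈ R then 1 else 0)) := by
            unfold phi
            rw [← Finset.mul_prod_erase univ _ (Finset.mem_univ m₀)]
            have hm0fac : ((if A m₀ ∈ insert (B m₀) R then (1:ℝ) else 0)
                - (if B m₀ ∈ insert (B m₀) R then 1 else 0)) = -1 := by
              rw [if_pos (Finset.mem_insert_self _ _), if_neg (by
                rw [Finset.mem_insert]; rintro (h | h)
                · exact hAB0 h
                · exact hne.1 h)]
              ring
            rw [hm0fac]
            rw [Finset.prod_congr rfl fun m hm =>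
              hfac m (Finset.mem_erase.1 hm).1 _ (Or.inr rfl)]
            ring
          rw [e1, e2]; ring
        · -- other terms vanish
          have hi1 : i ≠ A m₀ ∧ i ≠ B m₀ := by
            rw [Finset.mem_insert, Finset.mem_singleton] at hni
            tauto
          refine phi_eq_zero_of_neither (m := m₀) ?_ ?_
          · rw [Finset.mem_insert]
            rintro (h | h)
            · exact hi1.1 h.symm
            · exact hne.1 h
          · rw [Finset.mem_insert]
            rintro (h | h)
            · exact hi1.2 h.symm
            · exact hne.2 h
end Phi

section Phi2
variable {n d : ℕ} {A B : Fin d → Fin n}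

lemma phi_compl (T : Finset (Fin n)) : phi A B Tᶜ = (-1)^d * phi A B T := by
  unfold phi
  have h : ∀ m : Fin d, ((if A m ∈ Tᶜ then (1:ℝ) else 0) - (if B m ∈ Tᶜ then (1:ℝ) else 0))
      = (-1) * ((if A m ∈ T then (1:ℝ) else 0) - (if B m ∈ T then (1:ℝ) else 0)) := by
    intro m
    by_cases h1 : A m ∈ T <;> by_cases h2 : B m ∈ T <;>
      simp [Finset.mem_compl, h1, h2]
  rw [Finset.prod_congr rfl (fun m _ => h m), Finset.prod_mul_distrib,
    Finset.prod_const, Finset.card_univ, Fintype.card_fin]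

lemma phi_up (hA : Function.Injective A) (hB : Function.Injective B)
    (hAB : ∀ i j, A i ≠ B j) (S : Finset (Fin n)) :
    ∑ i ∈ S, phi A B (S.erase i) = ((S.card:ℝ) - d) * phi A B S := by
  have hSn : S.card ≤ n := by simpa using Finset.card_le_card (Finset.subset_univ S)
  have h1 : ∀ i ∈ S, phi A B (S.erase i) = (-1)^d * phi A B (insert i Sᶜ) := by
    intro i _
    have h : S.erase i = (insert i Sᶜ)ᶜ := by rw [Finset.compl_insert, compl_compl]
    rw [h, phi_compl]
  rw [Finset.sum_congr rfl h1, ← Finset.mul_sum]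
  have h2 : ∑ i ∈ S, phi A B (insert i Sᶜ) = ∑ i ∈ (Sᶜ)ᶜ, phi A B (insert i Sᶜ) := by
    rw [compl_compl]
  rw [h2, phi_down hA hB hAB, phi_compl S, Finset.card_compl, Fintype.card_fin,
    Nat.cast_sub hSn]
  have h3 : (-1:ℝ)^(d*2) = 1 := by
    rw [mul_comm d 2, pow_mul]; norm_num
  ring_nf
  rw [h3]
  ring

end Phi2

section Iter
open Classical
variable {n d : ℕ} {A B : Fin d → Fin n}

open Classical in
noncomputable def Sdown (A B : Fin d → Fin n) (a : ℕ) (R : Finset (Fin n)) : ℝ :=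
  ∑ T ∈ Finset.univ.filter (fun T : Finset (Fin n) => R ⊆ T ∧ T.card = R.card + a),
    phi A B T

open Classical in
noncomputable def Qup (A B : Fin d → Fin n) (a : ℕ) (S : Finset (Fin n)) : ℝ :=
  ∑ R ∈ Finset.univ.filter (fun R : Finset (Fin n) => R ⊆ S ∧ R.card + a = S.card),
    phi A B R

lemma Sdown_zero (R : Finset (Fin n)) : Sdown A B 0 R = phi A B R := by
  unfold Sdown
  have h : Finset.univ.filter (fun T : Finset (Fin n) => R ⊆ T ∧ T.card = R.card + 0) = {R} := by
    ext T
    simp only [Finset.mem_filter, Finset.mem_univ, true_and, Finset.mem_singleton, Nat.add_zero]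
    constructor
    · rintro ⟨h1, h2⟩
      exact (Finset.eq_of_subset_of_card_le h1 (le_of_eq h2)).symm
    · rintro rfl; exact ⟨Finset.Subset.refl _, rfl⟩
  rw [h, Finset.sum_singleton]

lemma Qup_zero (S : Finset (Fin n)) : Qup A B 0 S = phi A B S := by
  unfold Qup
  have h : Finset.univ.filter (fun R : Finset (Fin n) => R ⊆ S ∧ R.card + 0 = S.card) = {S} := by
    ext R
    simp only [Finset.mem_filter, Finset.mem_univ, true_and, Finset.mem_singleton, Nat.add_zero]
    constructor
    · rintro ⟨h1, h2⟩
      exact Finset.eq_of_subset_of_card_le h1 (le_of_eq h2.symm)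
    · rintro rfl; exact ⟨Finset.Subset.refl _, rfl⟩
  rw [h, Finset.sum_singleton]

lemma Sdown_succ (a : ℕ) (R : Finset (Fin n)) :
    ((a:ℝ)+1) * Sdown A B (a+1) R = ∑ i ∈ Rᶜ, Sdown A B a (insert i R) := by
  have step1 : ∀ i ∈ Rᶜ, Sdown A B a (insert i R)
      = ∑ T ∈ Finset.univ.filter
          (fun T : Finset (Fin n) => insert i R ⊆ T ∧ T.card = R.card + 1 + a), phi A B T := by
    intro i hi
    unfold Sdown
    congr 1
    apply Finset.filter_congr
    intro T _
    rw [Finset.card_insert_of_notMem (Finset.mem_compl.1 hi)]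
  rw [Finset.sum_congr rfl step1]
  -- turn everything into sums over univ with ite
  have e1 : ∑ i ∈ Rᶜ, (∑ T ∈ Finset.univ.filter
        (fun T : Finset (Fin n) => insert i R ⊆ T ∧ T.card = R.card + 1 + a), phi A B T)
      = ∑ i : Fin n, ∑ T : Finset (Fin n),
          if (i ∉ R ∧ insert i R ⊆ T ∧ T.card = R.card + 1 + a) then phi A B T else 0 := by
    rw [← Finset.sum_filter_add_sum_filter_not Finset.univ (· ∈ Rᶜ)
      (fun i => ∑ T : Finset (Fin n),
        if (i ∉ R ∧ insert i R ⊆ T ∧ T.card = R.card + 1 + a) then phi A B T else 0)]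
    rw [Finset.filter_univ_mem]
    have z : ∑ i ∈ Finset.univ.filter (fun i => ¬ i ∈ Rᶜ), ∑ T : Finset (Fin n),
        (if (i ∉ R ∧ insert i R ⊆ T ∧ T.card = R.card + 1 + a) then phi A B T else 0) = 0 := by
      apply Finset.sum_eq_zero
      intro i hi
      rw [Finset.mem_filter, Finset.mem_compl, not_not] at hi
      apply Finset.sum_eq_zero
      intro T _
      rw [if_neg]
      rintro ⟨h, -⟩
      exact h hi.2
    rw [z, add_zero]
    apply Finset.sum_congr rfl
    intro i hi
    rw [Finset.sum_filter]
    apply Finset.sum_congr rfl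
    intro T _
    congr 1
    simp only [eq_iff_iff]
    rw [Finset.mem_compl] at hi
    tauto
  rw [e1, Finset.sum_comm]
  -- now for each T, compute the inner sum over i
  have e2 : ∀ T : Finset (Fin n),
      (∑ i : Fin n, if (i ∉ R ∧ insert i R ⊆ T ∧ T.card = R.card + 1 + a) then phi A B T else 0)
      = (if (R ⊆ T ∧ T.card = R.card + (a+1)) then ((a:ℝ)+1) * phi A B T else 0) := by
    intro T
    by_cases hC : R ⊆ T ∧ T.card = R.card + (a+1)
    · rw [if_pos hC]
      have hiff : ∀ i : Fin n, (i ∉ R ∧ insert i R ⊆ T ∧ T.card = R.card + 1 + a) ↔ i ∈ T \ R := by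
        intro i
        rw [Finset.mem_sdiff]
        constructor
        · rintro ⟨h1, h2, -⟩
          exact ⟨h2 (Finset.mem_insert_self i R), h1⟩
        · rintro ⟨h1, h2⟩
          refine ⟨h2, Finset.insert_subset h1 hC.1, by omega⟩
      rw [Finset.sum_congr rfl (fun i _ => by rw [if_congr (hiff i) rfl rfl])]
      rw [Finset.sum_ite_mem, Finset.univ_inter, Finset.sum_const, nsmul_eq_mul]
      have hcard : (T \ R).card = a + 1 := by
        rw [Finset.card_sdiff_of_subset hC.1]; omega
      rw [hcard]
      push_cast
      ring
    · rw [if_neg hC]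
      apply Finset.sum_eq_zero
      intro i _
      rw [if_neg]
      rintro ⟨h1, h2, h3⟩
      exact hC ⟨(Finset.subset_insert i R).trans h2, by omega⟩
  rw [Finset.sum_congr rfl (fun T _ => e2 T)]
  unfold Sdown
  rw [Finset.sum_filter, Finset.mul_sum]
  apply Finset.sum_congr rfl
  intro T _
  by_cases hC : R ⊆ T ∧ T.card = R.card + (a+1)
  · simp only [if_pos hC]
  · simp only [if_neg hC]; ring

lemma Qup_succ (a : ℕ) (S : Finset (Fin n)) :
    ((a:ℝ)+1) * Qup A B (a+1) S = ∑ i ∈ S, Qup A B a (S.erase i) := by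
  have step1 : ∀ i ∈ S, Qup A B a (S.erase i)
      = ∑ R ∈ Finset.univ.filter
          (fun R : Finset (Fin n) => R ⊆ S.erase i ∧ R.card + a + 1 = S.card), phi A B R := by
    intro i hi
    unfold Qup
    congr 1
    apply Finset.filter_congr
    intro R _
    rw [Finset.card_erase_of_mem hi]
    have h1 : 1 ≤ S.card := Finset.card_pos.2 ⟨i, hi⟩
    constructor <;> rintro ⟨hs, hc⟩ <;> exact ⟨hs, by omega⟩
  rw [Finset.sum_congr rfl step1]
  have e1 : ∑ i ∈ S, (∑ R ∈ Finset.univ.filter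
        (fun R : Finset (Fin n) => R ⊆ S.erase i ∧ R.card + a + 1 = S.card), phi A B R)
      = ∑ i : Fin n, ∑ R : Finset (Fin n),
          if (i ∈ S ∧ R ⊆ S.erase i ∧ R.card + a + 1 = S.card) then phi A B R else 0 := by
    rw [← Finset.sum_filter_add_sum_filter_not Finset.univ (· ∈ S)
      (fun i => ∑ R : Finset (Fin n),
        if (i ∈ S ∧ R ⊆ S.erase i ∧ R.card + a + 1 = S.card) then phi A B R else 0)]
    rw [Finset.filter_univ_mem]
    have z : ∑ i ∈ Finset.univ.filter (fun i => ¬ i ∈ S), ∑ R : Finset (Fin n),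
        (if (i ∈ S ∧ R ⊆ S.erase i ∧ R.card + a + 1 = S.card) then phi A B R else 0) = 0 := by
      apply Finset.sum_eq_zero
      intro i hi
      rw [Finset.mem_filter] at hi
      apply Finset.sum_eq_zero
      intro R _
      rw [if_neg]
      rintro ⟨h, -⟩
      exact hi.2 h
    rw [z, add_zero]
    apply Finset.sum_congr rfl
    intro i hi
    rw [Finset.sum_filter]
    apply Finset.sum_congr rfl
    intro R _
    congr 1
    simp only [eq_iff_iff]
    tauto
  rw [e1, Finset.sum_comm]
  have e2 : ∀ R : Finset (Fin n),
      (∑ i : Fin n, if (i ∈ S ∧ R ⊆ S.erase i ∧ R.card + a + 1 = S.card) then phi A B R else 0)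
      = (if (R ⊆ S ∧ R.card + (a+1) = S.card) then ((a:ℝ)+1) * phi A B R else 0) := by
    intro R
    by_cases hC : R ⊆ S ∧ R.card + (a+1) = S.card
    · rw [if_pos hC]
      have hiff : ∀ i : Fin n, (i ∈ S ∧ R ⊆ S.erase i ∧ R.card + a + 1 = S.card) ↔ i ∈ S \ R := by
        intro i
        rw [Finset.mem_sdiff]
        constructor
        · rintro ⟨h1, h2, -⟩
          refine ⟨h1, fun hiR => ?_⟩
          exact (Finset.notMem_erase i S) (h2 hiR)
        · rintro ⟨h1, h2⟩
          exact ⟨h1, (Finset.subset_erase).2 ⟨hC.1, h2⟩, by omega⟩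
      rw [Finset.sum_congr rfl (fun i _ => by rw [if_congr (hiff i) rfl rfl])]
      rw [Finset.sum_ite_mem, Finset.univ_inter, Finset.sum_const, nsmul_eq_mul]
      have hcard : (S \ R).card = a + 1 := by
        rw [Finset.card_sdiff_of_subset hC.1]; omega
      rw [hcard]
      push_cast
      ring
    · rw [if_neg hC]
      apply Finset.sum_eq_zero
      intro i _
      rw [if_neg]
      rintro ⟨h1, h2, h3⟩
      exact hC ⟨(h2.trans (Finset.erase_subset i S)), by omega⟩
  rw [Finset.sum_congr rfl (fun R _ => e2 R)]
  unfold Qup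
  rw [Finset.sum_filter, Finset.mul_sum]
  apply Finset.sum_congr rfl
  intro R _
  by_cases hC : R ⊆ S ∧ R.card + (a+1) = S.card
  · simp only [if_pos hC]
  · simp only [if_neg hC]; ring

lemma Sdown_eq (hA : Function.Injective A) (hB : Function.Injective B)
    (hAB : ∀ i j, A i ≠ B j) :
    ∀ (a : ℕ) (R : Finset (Fin n)), (a.factorial : ℝ) * Sdown A B a R
      = (∏ t ∈ Finset.range a, ((n:ℝ) - R.card - t - d)) * phi A B R := by
  intro a
  induction a with
  | zero => intro R; simp [Sdown_zero]
  | succ a ih =>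
    intro R
    have h1 : ((a+1).factorial : ℝ) * Sdown A B (a+1) R
        = (a.factorial : ℝ) * (((a:ℝ)+1) * Sdown A B (a+1) R) := by
      rw [Nat.factorial_succ]; push_cast; ring
    rw [h1, Sdown_succ, Finset.mul_sum]
    have h2 : ∀ i ∈ Rᶜ, (a.factorial : ℝ) * Sdown A B a (insert i R)
        = (∏ t ∈ Finset.range a, ((n:ℝ) - R.card - 1 - t - d)) * phi A B (insert i R) := by
      intro i hi
      rw [ih (insert i R), Finset.card_insert_of_notMem (Finset.mem_compl.1 hi)]
      congr 1
      apply Finset.prod_congr rfl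
      intro t _
      push_cast
      ring
    rw [Finset.sum_congr rfl h2, ← Finset.mul_sum, phi_down hA hB hAB]
    rw [Finset.prod_range_succ']
    have h3 : (∏ t ∈ Finset.range a, ((n:ℝ) - R.card - 1 - t - d))
        = ∏ t ∈ Finset.range a, ((n:ℝ) - R.card - ((t:ℝ)+1) - d) :=
      Finset.prod_congr rfl fun t _ => by ring
    rw [h3]
    push_cast
    ring

lemma Qup_eq (hA : Function.Injective A) (hB : Function.Injective B)
    (hAB : ∀ i j, A i ≠ B j) :
    ∀ (a : ℕ) (S : Finset (Fin n)), (a.factorial : ℝ) * Qup A B a S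
      = (∏ t ∈ Finset.range a, ((S.card:ℝ) - t - d)) * phi A B S := by
  intro a
  induction a with
  | zero => intro S; simp [Qup_zero]
  | succ a ih =>
    intro S
    have h1 : ((a+1).factorial : ℝ) * Qup A B (a+1) S
        = (a.factorial : ℝ) * (((a:ℝ)+1) * Qup A B (a+1) S) := by
      rw [Nat.factorial_succ]; push_cast; ring
    rw [h1, Qup_succ, Finset.mul_sum]
    have h2 : ∀ i ∈ S, (a.factorial : ℝ) * Qup A B a (S.erase i)
        = (∏ t ∈ Finset.range a, ((S.card:ℝ) - 1 - t - d)) * phi A B (S.erase i) := by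
      intro i hi
      rw [ih (S.erase i), Finset.card_erase_of_mem hi]
      congr 1
      apply Finset.prod_congr rfl
      intro t _
      have h1 : 1 ≤ S.card := Finset.card_pos.2 ⟨i, hi⟩
      rw [Nat.cast_sub h1]
      push_cast
      ring
    rw [Finset.sum_congr rfl h2, ← Finset.mul_sum, phi_up hA hB hAB]
    rw [Finset.prod_range_succ']
    have h3 : (∏ t ∈ Finset.range a, ((S.card:ℝ) - 1 - t - d))
        = ∏ t ∈ Finset.range a, ((S.card:ℝ) - ((t:ℝ)+1) - d) :=
      Finset.prod_congr rfl fun t _ => by ring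
    rw [h3]
    push_cast
    ring

end Iter

section MainB
open Classical
variable {n d : ℕ} {A B : Fin d → Fin n}

lemma main_b (hA : Function.Injective A) (hB : Function.Injective B)
    (hAB : ∀ i j, A i ≠ B j) {k b : ℕ} (hbk : b ≤ k)
    (S : Finset (Fin n)) (hS : S.card = k) :
    ∑ T ∈ Finset.univ.filter (fun T : Finset (Fin n) => T.card = k),
      (((S ∩ T).card.choose b : ℝ)) * phi A B T
    = (∏ t ∈ Finset.range (k-b), ((n:ℝ) - b - t - d))
      * (∏ t ∈ Finset.range (k-b), ((k:ℝ) - t - d))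
      / (((k-b).factorial : ℝ) * ((k-b).factorial : ℝ)) * phi A B S := by
  have hfac : (((k-b).factorial : ℕ) : ℝ) ≠ 0 := Nat.cast_ne_zero.2 (Nat.factorial_ne_zero _)
  have hchoose : ∀ T : Finset (Fin n), (((S ∩ T).card.choose b : ℝ))
      = ∑ R : Finset (Fin n), if (R ⊆ S ∧ R ⊆ T ∧ R.card = b) then (1:ℝ) else 0 := by
    intro T
    have hfil : Finset.univ.filter (fun R : Finset (Fin n) => R ⊆ S ∧ R ⊆ T ∧ R.card = b)
        = Finset.powersetCard b (S ∩ T) := by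
      ext R
      simp [Finset.mem_powersetCard, Finset.subset_inter_iff, and_assoc]
    rw [Finset.sum_boole, hfil, Finset.card_powersetCard]
  have e0 : ∑ T ∈ Finset.univ.filter (fun T : Finset (Fin n) => T.card = k),
        (((S ∩ T).card.choose b : ℝ)) * phi A B T
      = ∑ T ∈ Finset.univ.filter (fun T : Finset (Fin n) => T.card = k),
        ∑ R : Finset (Fin n), (if (R ⊆ S ∧ R ⊆ T ∧ R.card = b) then phi A B T else 0) := by
    apply Finset.sum_congr rfl
    intro T _
    rw [hchoose T, Finset.sum_mul]
    apply Finset.sum_congr rfl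
    intro R _
    rw [ite_mul, one_mul, zero_mul]
  rw [e0, Finset.sum_filter]
  have e1 : ∀ T : Finset (Fin n),
      (if T.card = k then
        (∑ R : Finset (Fin n), if (R ⊆ S ∧ R ⊆ T ∧ R.card = b) then phi A B T else 0) else 0)
      = ∑ R : Finset (Fin n),
          if (T.card = k ∧ R ⊆ S ∧ R ⊆ T ∧ R.card = b) then phi A B T else 0 := by
    intro T
    by_cases h : T.card = k
    · rw [if_pos h]
      apply Finset.sum_congr rfl
      intro R _
      congr 1
      simp only [eq_iff_iff]
      tauto
    · rw [if_neg h]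
      symm
      apply Finset.sum_eq_zero
      intro R _
      rw [if_neg]
      tauto
  rw [Finset.sum_congr rfl (fun T _ => e1 T), Finset.sum_comm]
  have e2 : ∀ R : Finset (Fin n),
      (∑ T : Finset (Fin n), if (T.card = k ∧ R ⊆ S ∧ R ⊆ T ∧ R.card = b) then phi A B T else 0)
      = if (R ⊆ S ∧ R.card + (k-b) = S.card) then Sdown A B (k-b) R else 0 := by
    intro R
    by_cases hR : R ⊆ S ∧ R.card + (k-b) = S.card
    · rw [if_pos hR]
      have hRb : R.card = b := by omega
      unfold Sdown
      rw [Finset.sum_filter]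
      apply Finset.sum_congr rfl
      intro T _
      congr 1
      simp only [eq_iff_iff]
      constructor
      · rintro ⟨h1, h2, h3, h4⟩
        exact ⟨h3, by omega⟩
      · rintro ⟨h1, h2⟩
        exact ⟨by omega, hR.1, h1, hRb⟩
    · rw [if_neg hR]
      apply Finset.sum_eq_zero
      intro T _
      rw [if_neg]
      rintro ⟨h1, h2, h3, h4⟩
      refine hR ⟨h2, ?_⟩
      have hsub : R ⊆ S ∩ T := Finset.subset_inter_iff.2 ⟨h2, h3⟩
      have : R.card ≤ (S ∩ T).card := Finset.card_le_card hsub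
      have : (S ∩ T).card ≤ S.card := Finset.card_le_card Finset.inter_subset_left
      omega
  rw [Finset.sum_congr rfl (fun R _ => e2 R), ← Finset.sum_filter]
  have e3 : ∀ R ∈ Finset.univ.filter
      (fun R : Finset (Fin n) => R ⊆ S ∧ R.card + (k-b) = S.card),
      Sdown A B (k-b) R
        = (∏ t ∈ Finset.range (k-b), ((n:ℝ) - b - t - d)) / (((k-b).factorial : ℕ) : ℝ)
          * phi A B R := by
    intro R hR
    rw [Finset.mem_filter] at hR
    have hRb : R.card = b := by
      have := hR.2.2
      omega
    have h := Sdown_eq hA hB hAB (k-b) R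
    rw [hRb] at h
    field_simp at h ⊢
    linarith [h]
  rw [Finset.sum_congr rfl e3, ← Finset.mul_sum]
  have e4 : ∑ R ∈ Finset.univ.filter
        (fun R : Finset (Fin n) => R ⊆ S ∧ R.card + (k-b) = S.card), phi A B R
      = Qup A B (k-b) S := rfl
  rw [e4]
  have h := Qup_eq hA hB hAB (k-b) S
  rw [hS] at h
  have hQ : Qup A B (k-b) S
      = (∏ t ∈ Finset.range (k-b), ((k:ℝ) - t - d)) * phi A B S / (((k-b).factorial : ℕ) : ℝ) := by
    rw [eq_div_iff hfac, mul_comm]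
    exact h
  rw [hQ]
  field_simp

end MainB

noncomputable def cc (m : ℕ → ℝ) : ℕ → ℝ
  | b => m b - ∑ i ∈ (Finset.range b).attach, cc m i.1 * ((b.choose i.1 : ℕ) : ℝ)
  decreasing_by exact Finset.mem_range.1 i.2

lemma cc_spec (m : ℕ → ℝ) (j : ℕ) :
    m j = ∑ b ∈ Finset.range (j+1), cc m b * ((j.choose b : ℕ) : ℝ) := by
  have h : cc m j = m j - ∑ i ∈ Finset.range j, cc m i * ((j.choose i : ℕ) : ℝ) := by
    rw [cc]
    congr 1
    exact Finset.sum_attach (Finset.range j) (fun i => cc m i * ((j.choose i : ℕ) : ℝ))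
  rw [Finset.sum_range_succ, h, Nat.choose_self]
  push_cast
  ring

lemma cc_spec' (m : ℕ → ℝ) {j k : ℕ} (hjk : j ≤ k) :
    m j = ∑ b ∈ Finset.range (k+1), cc m b * ((j.choose b : ℕ) : ℝ) := by
  rw [cc_spec m j]
  apply Finset.sum_subset (Finset.range_subset_range.2 (by omega))
  intro b hb hnb
  rw [Finset.mem_range] at hb hnb
  rw [Nat.choose_eq_zero_of_lt (by omega)]
  push_cast
  ring

/-- If `M` is a matrix indexed by `k`-element subsets of `[n]` with `M(S,T)` depending
only on `|S ∩ T|` (i.e. `M` is in the Bose–Mesner algebra of the Johnson scheme),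
then for each `d ≤ k` there is an eigenvalue `λ_d(M)` such that every `χ_B`,
for `B` a top set of length `d`, is an eigenvector of `M` with eigenvalue `λ_d(M)`. -/
theorem johnson_scheme_eigenvectors {n k : ℕ} (hk1 : 1 ≤ k) (hkn : 2 * k ≤ n)
    (M : Slice n k → Slice n k → ℝ)
    (hM : ∀ S T S' T' : Slice n k,
      (S.1 ∩ T.1).card = (S'.1 ∩ T'.1).card → M S T = M S' T') :
    ∀ d : ℕ, d ≤ k → ∃ lam : ℝ, ∀ B : Fin d → Fin n, IsTopSet B →
      ∀ S : Slice n k,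
        (∑ T : Slice n k, M S T * toSlice k (chiB B) T) = lam * toSlice k (chiB B) S := by
  classical
  intro d hdk
  set m : ℕ → ℝ := fun j =>
    if h : ∃ P : Slice n k × Slice n k, (P.1.1 ∩ P.2.1).card = j then M h.choose.1 h.choose.2
    else 0 with hm
  set lam : ℝ := ∑ b ∈ Finset.range (k+1), cc m b *
      ((∏ t ∈ Finset.range (k-b), ((n:ℝ) - b - t - d))
        * (∏ t ∈ Finset.range (k-b), ((k:ℝ) - t - d))
        / (((k-b).factorial : ℝ) * ((k-b).factorial : ℝ))) with hlam
  refine ⟨lam, ?_⟩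
  intro B hB S
  have hBinj : Function.Injective B := hB.1.injective
  have hMm : ∀ S T : Slice n k, M S T = m ((S.1 ∩ T.1).card) := by
    intro S T
    have hex : ∃ P : Slice n k × Slice n k, (P.1.1 ∩ P.2.1).card = (S.1 ∩ T.1).card :=
      ⟨(S, T), rfl⟩
    rw [hm]
    simp only
    rw [dif_pos hex]
    exact hM S T _ _ hex.choose_spec.symm
  have hts : ∀ T : Slice n k, toSlice k (chiB B) T
      = ∑ A ∈ Finset.univ.filter (fun A : Fin d → Fin n =>
          Function.Injective A ∧ (∀ i j, A i ≠ B j) ∧ ∀ i, A i < B i), phi A B T.1 := by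
    intro T
    unfold toSlice chiB
    rw [map_sum]
    apply Finset.sum_congr rfl
    intro A _
    unfold chiAB phi
    rw [map_prod]
    apply Finset.prod_congr rfl
    intro i _
    rw [map_sub, MvPolynomial.eval_X, MvPolynomial.eval_X]
  have key : ∀ A : Fin d → Fin n, Function.Injective A → (∀ i j, A i ≠ B j) →
      ∑ T : Slice n k, M S T * phi A B T.1 = lam * phi A B S.1 := by
    intro A hA hAB
    have e1 : ∀ T : Slice n k, M S T * phi A B T.1
        = ∑ b ∈ Finset.range (k+1),
            cc m b * (((S.1 ∩ T.1).card.choose b : ℕ) : ℝ) * phi A B T.1 := by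
      intro T
      have hjk : (S.1 ∩ T.1).card ≤ k :=
        le_of_le_of_eq (Finset.card_le_card Finset.inter_subset_left) S.2
      rw [hMm S T, cc_spec' m hjk, Finset.sum_mul]
    rw [Finset.sum_congr rfl (fun T _ => e1 T), Finset.sum_comm]
    have e2 : ∀ b ∈ Finset.range (k+1),
        ∑ T : Slice n k, cc m b * (((S.1 ∩ T.1).card.choose b : ℕ) : ℝ) * phi A B T.1
        = (cc m b *
            ((∏ t ∈ Finset.range (k-b), ((n:ℝ) - b - t - d))
              * (∏ t ∈ Finset.range (k-b), ((k:ℝ) - t - d))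
              / (((k-b).factorial : ℝ) * ((k-b).factorial : ℝ)))) * phi A B S.1 := by
      intro b hb
      have hbk : b ≤ k := by
        rw [Finset.mem_range] at hb; omega
      have h1 : ∀ T : Slice n k,
          cc m b * (((S.1 ∩ T.1).card.choose b : ℕ) : ℝ) * phi A B T.1
          = cc m b * ((((S.1 ∩ T.1).card.choose b : ℕ) : ℝ) * phi A B T.1) := fun T => by ring
      rw [Finset.sum_congr rfl (fun T _ => h1 T), ← Finset.mul_sum]
      have h2 : ∑ T : Slice n k, (((S.1 ∩ T.1).card.choose b : ℕ) : ℝ) * phi A B T.1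
          = ∑ T ∈ Finset.univ.filter (fun T : Finset (Fin n) => T.card = k),
              (((S.1 ∩ T).card.choose b : ℕ) : ℝ) * phi A B T := by
        symm
        apply Finset.sum_subtype
        intro x
        simp
      rw [h2, main_b hA hBinj hAB hbk S.1 S.2]
      ring
    rw [Finset.sum_congr rfl e2, ← Finset.sum_mul, hlam]
  calc ∑ T : Slice n k, M S T * toSlice k (chiB B) T
      = ∑ T : Slice n k, ∑ A ∈ Finset.univ.filter (fun A : Fin d → Fin n =>
          Function.Injective A ∧ (∀ i j, A i ≠ B j) ∧ ∀ i, A i < B i),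
            M S T * phi A B T.1 := by
        apply Finset.sum_congr rfl
        intro T _
        rw [hts T, Finset.mul_sum]
    _ = ∑ A ∈ Finset.univ.filter (fun A : Fin d → Fin n =>
          Function.Injective A ∧ (∀ i j, A i ≠ B j) ∧ ∀ i, A i < B i),
          ∑ T : Slice n k, M S T * phi A B T.1 := Finset.sum_comm
    _ = ∑ A ∈ Finset.univ.filter (fun A : Fin d → Fin n =>
          Function.Injective A ∧ (∀ i j, A i ≠ B j) ∧ ∀ i, A i < B i),
          lam * phi A B S.1 := by
        apply Finset.sum_congr rfl
        intro A hA
        rw [Finset.mem_filter] at hA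
        exact key A hA.2.1 hA.2.2.1
    _ = lam * toSlice k (chiB B) S := by
        rw [← Finset.mul_sum, hts S]
end
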